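/- arXiv:2411.19896 — 9 statements merged into one kernel-verified Lean document; each statement's English description precedes it below -/
import Mathlib

section
/- Let m, κ ∈ ℕ with m ≥ 1, let α* ∈ ℝ^m, r > 0, γ ≥ 0 and C ≥ 0. Let f : ℝ^m → ℝ be infinitely differentiable, suppose that for every k ∈ ℕ and every index tuple (i_1, …, i_k) ∈ {1, …, m}^k one has |∂_{i_1}⋯∂_{i_k} f(α*)| ≤ γ^k · C, and suppose that f coincides with its Taylor series at α* on V(α*, r), i.e. f(α) = Σ_{k=0}^{∞} (1/k!) Σ_{i_1,…,i_k=1}^{m} ∂_{i_1}⋯∂_{i_k} f(α*) ∏_{j=1}^{k}(α_{i_j} − α*_{i_j}) for all α ∈ V(α*, r). Then, for α distributed uniformly on V(α*, r), E[(f(α) − T_κ f(α))²] ≤ (2 γ² m r² / 3)^{κ+1} · (C² / (κ+1)!) · e^{2 γ² m r² / 3}. -/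
/-!
On the cube, `f - T_κ f` is the tail `∑_{k > κ} a_k` of the Taylor series, `a_k` being the
order-`k` term. Expanding `E[a_k a_l]` into monomials in the centred coordinates
`y_i = α_i - α*_i`, every monomial has nonnegative expectation (odd moments of a centred uniform
vanish), so the derivative bounds give `E[a_k a_l] ≤ C² γ^(k+l) / (k! l!) · E[S^(k+l)]` with
`S = ∑ y_i`. The moments of the uniform distribution on `[-r, r]` are dominated by those of a
Gaussian of variance `r²/3`, and such domination passes to sums of independent variables (the
moments of a sum are the binomial convolution of the moments), so `S` is dominated by a Gaussian of
variance `m r²/3`. Grouping `k + l = 2p` and using `∑_{k+l=n} 1/(k! l!) = 2^n/n!` leaves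
`C² ∑_{p > κ} (2γ² m r²/3)^p / p!`, an exponential tail. Dominated convergence passes from partial
sums to the whole series.
-/

open MeasureTheory ProbabilityTheory Finset
open scoped Nat ContDiff

noncomputable section

/-- The moment `E[G ^ (2 * p)]` of a centred Gaussian `G` of variance `s`. -/
def gaussianMoment (s : ℝ) (p : ℕ) : ℝ := (2 * p)! / (2 ^ p * p !) * s ^ p

structure MomentsDominatedByGaussian (M : ℕ → ℝ) (s : ℝ) : Prop where
  nonneg : ∀ n, 0 ≤ M n
  odd_eq_zero : ∀ n, Odd n → M n = 0
  even_le : ∀ p, M (2 * p) ≤ gaussianMoment s p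

lemma sum_range_two_mul_of_odd_eq_zero {h : ℕ → ℝ} (hodd : ∀ n, Odd n → h n = 0) (b : ℕ) :
    ∑ n ∈ range (2 * b), h n = ∑ p ∈ range b, h (2 * p) := by
  induction b with
  | zero => simp
  | succ b ih =>
    rw [mul_add_one, sum_range_succ, sum_range_succ, sum_range_succ, ih,
      hodd _ (odd_two_mul_add_one b), add_zero]

lemma sum_Ico_two_mul_of_odd_eq_zero {h : ℕ → ℝ} (hodd : ∀ n, Odd n → h n = 0) (a b : ℕ) :
    ∑ n ∈ Ico (2 * a) (2 * b), h n = ∑ p ∈ Ico a b, h (2 * p) := by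
  rcases le_total a b with hab | hba
  · rw [sum_Ico_eq_sub _ (by omega), sum_Ico_eq_sub _ hab,
      sum_range_two_mul_of_odd_eq_zero hodd, sum_range_two_mul_of_odd_eq_zero hodd]
  · simp [Ico_eq_empty_of_le hba, Ico_eq_empty_of_le (Nat.mul_le_mul_left 2 hba)]

lemma gaussianMoment_add (s t : ℝ) (p : ℕ) :
    gaussianMoment (s + t) p = ∑ q ∈ range (p + 1),
      gaussianMoment s q * gaussianMoment t (p - q) * (2 * p).choose (2 * q) := by
  rw [gaussianMoment, add_pow, mul_sum]
  refine sum_congr rfl fun q hq => ?_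
  obtain ⟨u, rfl⟩ := Nat.exists_eq_add_of_le (Nat.lt_succ_iff.mp (mem_range.mp hq))
  rw [Nat.add_sub_cancel_left, mul_add, Nat.cast_add_choose, Nat.cast_add_choose, gaussianMoment,
    gaussianMoment]
  field_simp
  ring

lemma MomentsDominatedByGaussian.binomial_convolution {M M' : ℕ → ℝ} {s t : ℝ}
    (hM : MomentsDominatedByGaussian M s) (hM' : MomentsDominatedByGaussian M' t) :
    MomentsDominatedByGaussian
      (fun n => ∑ j ∈ range (n + 1), M j * M' (n - j) * n.choose j) (s + t) where
  nonneg n := sum_nonneg fun j _ => by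
    have := hM.nonneg j
    have := hM'.nonneg (n - j)
    positivity
  odd_eq_zero n hn := sum_eq_zero fun j hj => by
    rcases Nat.even_or_odd j with hj' | hj'
    · rw [hM'.odd_eq_zero _ (Nat.Odd.sub_even (by simpa [Nat.lt_succ_iff] using hj) hn hj'),
        mul_zero, zero_mul]
    · rw [hM.odd_eq_zero _ hj', zero_mul, zero_mul]
  even_le p := by
    have hodd : ∀ j, Odd j → M j * M' (2 * p - j) * (2 * p).choose j = 0 := fun j hj => by
      rw [hM.odd_eq_zero _ hj, zero_mul, zero_mul]
    -- pad `range (2 * p + 1)` with the vanishing odd index `2 * p + 1`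
    rw [← add_zero (∑ j ∈ range (2 * p + 1), _), ← hodd _ (odd_two_mul_add_one p),
      ← sum_range_succ, show 2 * p + 1 + 1 = 2 * (p + 1) by ring,
      sum_range_two_mul_of_odd_eq_zero hodd, gaussianMoment_add]
    refine sum_le_sum fun q _ => ?_
    rw [← Nat.mul_sub]
    gcongr
    · exact hM'.nonneg _
    · exact (hM.nonneg _).trans (hM.even_le q)
    · exact hM.even_le q
    · exact hM'.even_le _

lemma six_pow_mul_factorial_le (q : ℕ) : 6 ^ q * q ! ≤ (2 * q + 1)! := by
  induction q with
  | zero => simp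
  | succ q ih =>
    calc 6 ^ (q + 1) * (q + 1)! = 6 * (q + 1) * (6 ^ q * q !) := by
          rw [pow_succ, Nat.factorial_succ]; ring
      _ ≤ (2 * q + 1 + 1 + 1) * (2 * q + 1 + 1) * (2 * q + 1)! :=
          Nat.mul_le_mul (by nlinarith) ih
      _ = (2 * (q + 1) + 1)! := by
          rw [show 2 * (q + 1) + 1 = 2 * q + 1 + 1 + 1 by ring,
            Nat.factorial_succ (2 * q + 1 + 1), Nat.factorial_succ (2 * q + 1)]
          ring

lemma pow_div_le_gaussianMoment (r : ℝ) (q : ℕ) :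
    r ^ (2 * q) / (2 * q + 1) ≤ gaussianMoment (r ^ 2 / 3) q := by
  have key : (6 : ℝ) ^ q * q ! ≤ (2 * q + 1)! := by exact_mod_cast six_pow_mul_factorial_le q
  have hfac : ((2 * q + 1)! : ℝ) = (2 * q + 1) * (2 * q)! := by
    push_cast [Nat.factorial_succ]; ring
  have h6 : (6 : ℝ) ^ q = 2 ^ q * 3 ^ q := by rw [← mul_pow]; norm_num
  have hr : 0 ≤ r ^ (2 * q) := by rw [pow_mul]; positivity
  rw [gaussianMoment, div_pow, ← pow_mul, div_le_iff₀ (by positivity)]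
  calc r ^ (2 * q) ≤ r ^ (2 * q) * ((2 * q + 1)! / (6 ^ q * q !)) :=
        le_mul_of_one_le_right hr ((one_le_div (by positivity)).mpr key)
    _ = _ := by
        rw [hfac, h6]
        field_simp

lemma sum_antidiagonal_inv_factorial_mul_factorial (n : ℕ) :
    ∑ kl ∈ antidiagonal n, ((kl.1 ! : ℝ) * kl.2 !)⁻¹ = 2 ^ n / n ! := by
  have h2 : (2 : ℝ) ^ n = ∑ kl ∈ antidiagonal n, (n.choose kl.1 : ℝ) := by
    simpa [one_add_one_eq_two] using (Commute.one_left (1 : ℝ)).add_pow' n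
  rw [h2, sum_div]
  refine sum_congr rfl fun kl hkl => ?_
  rw [← mem_antidiagonal.mp hkl, Nat.cast_add_choose]
  field_simp

lemma sum_Ico_pow_div_factorial_le {x : ℝ} (hx : 0 ≤ x) (K M : ℕ) :
    ∑ p ∈ Ico K M, x ^ p / p ! ≤ x ^ K / K ! * Real.exp x := by
  rw [sum_Ico_eq_sum_range]
  calc ∑ s ∈ range (M - K), x ^ (K + s) / (K + s)!
      ≤ ∑ s ∈ range (M - K), x ^ K / K ! * (x ^ s / s !) := by
        refine sum_le_sum fun s _ => ?_
        have hfac : ((K ! * s ! : ℕ) : ℝ) ≤ (K + s)! :=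
          Nat.cast_le.mpr (Nat.le_of_dvd (Nat.factorial_pos _)
            (Nat.factorial_mul_factorial_dvd_factorial_add K s))
        push_cast at hfac
        rw [pow_add, div_mul_div_comm]
        gcongr
    _ ≤ x ^ K / K ! * Real.exp x := by
        rw [← mul_sum]
        gcongr
        exact Real.sum_le_exp_of_nonneg hx _

theorem MomentsDominatedByGaussian.sum_Ico_sum_Ico_le {T : ℕ → ℝ} {σ γ : ℝ}
    (hT : MomentsDominatedByGaussian T σ) (hσ : 0 ≤ σ) (hγ : 0 ≤ γ) (K M : ℕ) :
    ∑ k ∈ Ico K M, ∑ l ∈ Ico K M, γ ^ (k + l) / (k ! * l !) * T (k + l)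
      ≤ (2 * γ ^ 2 * σ) ^ K / K ! * Real.exp (2 * γ ^ 2 * σ) := by
  have hw : ∀ n, Odd n → γ ^ n * T n * (2 ^ n / n !) = 0 := fun n hn => by
    rw [hT.odd_eq_zero n hn, mul_zero, zero_mul]
  calc ∑ k ∈ Ico K M, ∑ l ∈ Ico K M, γ ^ (k + l) / (k ! * l !) * T (k + l)
      = ∑ n ∈ Ico (2 * K) (2 * M), ∑ kl ∈ Ico K M ×ˢ Ico K M with kl.1 + kl.2 = n,
          γ ^ (kl.1 + kl.2) / (kl.1 ! * kl.2 !) * T (kl.1 + kl.2) := by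
        rw [← sum_product', sum_fiberwise_of_maps_to fun kl hkl => ?_]
        simp only [mem_product, mem_Ico] at hkl ⊢
        omega
    _ ≤ ∑ n ∈ Ico (2 * K) (2 * M), ∑ kl ∈ antidiagonal n,
          γ ^ (kl.1 + kl.2) / (kl.1 ! * kl.2 !) * T (kl.1 + kl.2) := by
        refine sum_le_sum fun n _ => sum_le_sum_of_subset_of_nonneg (fun kl hkl => ?_)
          fun kl _ _ => by have := hT.nonneg (kl.1 + kl.2); positivity
        exact mem_antidiagonal.mpr (mem_filter.mp hkl).2
    _ = ∑ n ∈ Ico (2 * K) (2 * M), γ ^ n * T n * (2 ^ n / n !) := by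
        refine sum_congr rfl fun n _ => ?_
        rw [← sum_antidiagonal_inv_factorial_mul_factorial, mul_sum]
        refine sum_congr rfl fun kl hkl => ?_
        rw [mem_antidiagonal.mp hkl]
        ring
    _ = ∑ p ∈ Ico K M, γ ^ (2 * p) * T (2 * p) * (2 ^ (2 * p) / (2 * p)!) :=
        sum_Ico_two_mul_of_odd_eq_zero hw K M
    _ ≤ ∑ p ∈ Ico K M, (2 * γ ^ 2 * σ) ^ p / p ! := by
        refine sum_le_sum fun p _ => ?_
        calc γ ^ (2 * p) * T (2 * p) * (2 ^ (2 * p) / (2 * p)!)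
            ≤ γ ^ (2 * p) * gaussianMoment σ p * (2 ^ (2 * p) / (2 * p)!) := by
              gcongr; exact hT.even_le p
          _ = (2 * γ ^ 2 * σ) ^ p / p ! := by
              rw [gaussianMoment]
              field_simp
              ring
    _ ≤ _ := sum_Ico_pow_div_factorial_le (by positivity) K M

section Independent

variable {Ω : Type*} [MeasurableSpace Ω] {μ : Measure Ω}

lemma momentsDominatedByGaussian_zero_pow : MomentsDominatedByGaussian (fun n => 0 ^ n) 0 where
  nonneg n := by positivity
  odd_eq_zero n hn := zero_pow (by rintro rfl; exact Nat.not_odd_zero hn)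
  even_le p := by rcases p with _ | p <;> simp [gaussianMoment]

namespace ProbabilityTheory.IndepFun

variable {X Y : Ω → ℝ}

lemma integrable_pow_mul_pow (hXY : IndepFun X Y μ) (hX : ∀ n, Integrable (fun x => X x ^ n) μ)
    (hY : ∀ n, Integrable (fun x => Y x ^ n) μ) (j k : ℕ) :
    Integrable (fun x => X x ^ j * Y x ^ k) μ :=
  (hXY.comp (measurable_id.pow_const j) (measurable_id.pow_const k)).integrable_mul (hX j) (hY k)

lemma integrable_add_pow (hXY : IndepFun X Y μ) (hX : ∀ n, Integrable (fun x => X x ^ n) μ)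
    (hY : ∀ n, Integrable (fun x => Y x ^ n) μ) (n : ℕ) :
    Integrable (fun x => (X x + Y x) ^ n) μ := by
  simp_rw [add_pow]
  exact integrable_finsetSum _ fun j _ =>
    (hXY.integrable_pow_mul_pow hX hY j (n - j)).mul_const _

lemma integral_add_pow (hXY : IndepFun X Y μ) (hX : ∀ n, Integrable (fun x => X x ^ n) μ)
    (hY : ∀ n, Integrable (fun x => Y x ^ n) μ) (n : ℕ) :
    ∫ x, (X x + Y x) ^ n ∂μ = ∑ j ∈ range (n + 1),
      (∫ x, X x ^ j ∂μ) * (∫ x, Y x ^ (n - j) ∂μ) * n.choose j := by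
  simp_rw [add_pow]
  rw [integral_finsetSum _ fun j _ => (hXY.integrable_pow_mul_pow hX hY j (n - j)).mul_const _]
  refine sum_congr rfl fun j _ => ?_
  rw [integral_mul_const]
  congr 1
  exact (hXY.comp (measurable_id.pow_const j) (measurable_id.pow_const (n - j))
    ).integral_fun_mul_eq_mul_integral (hX j).aestronglyMeasurable
      (hY (n - j)).aestronglyMeasurable

end ProbabilityTheory.IndepFun

namespace ProbabilityTheory.iIndepFun

variable {ι : Type*} {X : ι → Ω → ℝ}

lemma indepFun_fun_finsetSum_of_notMem (hX : iIndepFun X μ) (hmeas : ∀ i, Measurable (X i))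
    {t : Finset ι} {a : ι} (ha : a ∉ t) :
    IndepFun (X a) (fun x => ∑ i ∈ t, X i x) μ := by
  simpa only [← Finset.sum_apply] using (hX.indepFun_finsetSum_of_notMem hmeas ha).symm

lemma integrable_sum_pow [IsFiniteMeasure μ] (hX : iIndepFun X μ)
    (hmeas : ∀ i, Measurable (X i)) (hint : ∀ i n, Integrable (fun x => X i x ^ n) μ)
    (t : Finset ι) (n : ℕ) :
    Integrable (fun x => (∑ i ∈ t, X i x) ^ n) μ := by
  classical
  induction t using Finset.induction_on generalizing n with
  | empty => simp
  | insert a t ha ih =>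
    simp_rw [sum_insert ha]
    exact (hX.indepFun_fun_finsetSum_of_notMem hmeas ha).integrable_add_pow (hint a) ih n

theorem momentsDominatedByGaussian_sum [IsProbabilityMeasure μ] (hX : iIndepFun X μ)
    (hmeas : ∀ i, Measurable (X i)) (hint : ∀ i n, Integrable (fun x => X i x ^ n) μ)
    {s : ι → ℝ} (hdom : ∀ i, MomentsDominatedByGaussian (fun n => ∫ x, X i x ^ n ∂μ) (s i))
    (t : Finset ι) :
    MomentsDominatedByGaussian (fun n => ∫ x, (∑ i ∈ t, X i x) ^ n ∂μ) (∑ i ∈ t, s i) := by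
  classical
  induction t using Finset.induction_on with
  | empty => simpa using momentsDominatedByGaussian_zero_pow
  | insert a t ha ih =>
    simp_rw [sum_insert ha, (hX.indepFun_fun_finsetSum_of_notMem hmeas ha).integral_add_pow
      (hint a) (hX.integrable_sum_pow hmeas hint t)]
    exact (hdom a).binomial_convolution ih

end ProbabilityTheory.iIndepFun

end Independent

section Integral

variable {Ω : Type*} [MeasurableSpace Ω] {μ : Measure Ω}

lemma integral_sum_mul_sum_le {ι κ : Type*} (s : Finset ι) (t : Finset κ) {P : ι → Ω → ℝ}
    {Q : κ → Ω → ℝ} {a : ι → ℝ} {b : κ → ℝ} {A B : ℝ}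
    (ha : ∀ i, |a i| ≤ A) (hb : ∀ j, |b j| ≤ B)
    (hint : ∀ i j, Integrable (fun x => P i x * Q j x) μ)
    (hnonneg : ∀ i j, 0 ≤ ∫ x, P i x * Q j x ∂μ) :
    ∫ x, (∑ i ∈ s, a i * P i x) * (∑ j ∈ t, b j * Q j x) ∂μ
      ≤ A * B * ∫ x, (∑ i ∈ s, P i x) * (∑ j ∈ t, Q j x) ∂μ := by
  have hintegral (a : ι → ℝ) (b : κ → ℝ) :
      ∫ x, (∑ i ∈ s, a i * P i x) * (∑ j ∈ t, b j * Q j x) ∂μ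
        = ∑ i ∈ s, ∑ j ∈ t, a i * b j * ∫ x, P i x * Q j x ∂μ := by
    have hexpand (x : Ω) : (∑ i ∈ s, a i * P i x) * (∑ j ∈ t, b j * Q j x)
        = ∑ i ∈ s, ∑ j ∈ t, a i * b j * (P i x * Q j x) := by
      rw [sum_mul_sum]
      exact sum_congr rfl fun i _ => sum_congr rfl fun j _ => by ring
    simp_rw [hexpand, ← integral_const_mul]
    rw [integral_finsetSum _ fun i _ => integrable_finsetSum _ fun j _ => (hint i j).const_mul _]
    exact sum_congr rfl fun i _ => integral_finsetSum _ fun j _ => (hint i j).const_mul _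
  calc ∫ x, (∑ i ∈ s, a i * P i x) * (∑ j ∈ t, b j * Q j x) ∂μ
      = ∑ i ∈ s, ∑ j ∈ t, a i * b j * ∫ x, P i x * Q j x ∂μ := hintegral a b
    _ ≤ ∑ i ∈ s, ∑ j ∈ t, A * B * ∫ x, P i x * Q j x ∂μ := by
        refine sum_le_sum fun i _ => sum_le_sum fun j _ =>
          mul_le_mul_of_nonneg_right ?_ (hnonneg i j)
        calc a i * b j ≤ |a i| * |b j| := (le_abs_self _).trans (abs_mul _ _).le
          _ ≤ A * B := mul_le_mul (ha i) (hb j) (abs_nonneg _) ((abs_nonneg _).trans (ha i))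
    _ = A * B * ∫ x, (∑ i ∈ s, P i x) * (∑ j ∈ t, Q j x) ∂μ := by
        simpa [mul_sum] using congrArg (A * B * ·) (hintegral 1 1).symm

lemma integral_sq_tsum_le [IsFiniteMeasure μ] {a : ℕ → Ω → ℝ} {b : ℕ → ℝ}
    (ha : ∀ k, AEStronglyMeasurable (a k) μ) (hb : Summable b)
    (hab : ∀ᵐ x ∂μ, ∀ k, |a k x| ≤ b k) {c : ℝ}
    (hc : ∀ N, ∫ x, (∑ k ∈ range N, a k x) ^ 2 ∂μ ≤ c) :
    ∫ x, (∑' k, a k x) ^ 2 ∂μ ≤ c := by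
  refine le_of_tendsto (tendsto_integral_of_dominated_convergence (fun _ => (∑' k, |b k|) ^ 2)
    (fun N => ?_) (integrable_const _) (fun N => ?_) ?_) (Filter.Eventually.of_forall hc)
  · exact ((Finset.aestronglyMeasurable_fun_sum _ fun k _ => ha k).pow 2)
  · filter_upwards [hab] with x hx
    rw [Real.norm_eq_abs, abs_pow]
    gcongr
    calc |∑ k ∈ range N, a k x| ≤ ∑ k ∈ range N, |b k| :=
          (abs_sum_le_sum_abs _ _).trans (sum_le_sum fun k _ => (hx k).trans (le_abs_self _))
      _ ≤ ∑' k, |b k| := hb.abs.sum_le_tsum _ fun k _ => abs_nonneg _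
  · filter_upwards [hab] with x hx
    exact ((hb.of_norm_bounded fun k => hx k).hasSum.tendsto_sum_nat).pow 2

end Integral

section Uniform

variable {r : ℝ}

def uniformIcc (c r : ℝ) : Measure ℝ :=
  (ENNReal.ofReal (2 * r))⁻¹ • volume.restrict (Set.Icc (c - r) (c + r))

lemma isProbabilityMeasure_uniformIcc (c : ℝ) (hr : 0 < r) :
    IsProbabilityMeasure (uniformIcc c r) := by
  constructor
  rw [uniformIcc, Measure.smul_apply, Measure.restrict_apply_univ, Real.volume_Icc,
    show c + r - (c - r) = 2 * r by ring, smul_eq_mul]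
  exact ENNReal.inv_mul_cancel (by simp [hr]) ENNReal.ofReal_ne_top

lemma ae_mem_Icc_uniformIcc (c r : ℝ) : ∀ᵐ t ∂uniformIcc c r, t ∈ Set.Icc (c - r) (c + r) :=
  Measure.ae_smul_measure (ae_restrict_mem measurableSet_Icc) _

lemma integral_uniformIcc_sub_pow (c : ℝ) (hr : 0 < r) (n : ℕ) :
    ∫ t, (t - c) ^ n ∂uniformIcc c r = if Even n then r ^ n / (n + 1) else 0 := by
  rw [uniformIcc, integral_smul_measure, ENNReal.toReal_inv,
    ENNReal.toReal_ofReal (by positivity), integral_Icc_eq_integral_Ioc,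
    ← intervalIntegral.integral_of_le (by linarith),
    intervalIntegral.integral_comp_sub_right (· ^ n), sub_sub_cancel_left, add_sub_cancel_left,
    integral_pow, smul_eq_mul]
  rcases Nat.even_or_odd n with hn | hn
  · rw [if_pos hn, (Even.add_one hn).neg_pow]
    field_simp
    ring
  · rw [if_neg (Nat.not_even_iff_odd.mpr hn), (Odd.add_one hn).neg_pow, sub_self, zero_div,
      mul_zero]

lemma momentsDominatedByGaussian_uniformIcc (c : ℝ) (hr : 0 < r) :
    MomentsDominatedByGaussian (fun n => ∫ t, (t - c) ^ n ∂uniformIcc c r) (r ^ 2 / 3) where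
  nonneg n := by
    rw [integral_uniformIcc_sub_pow c hr]
    split_ifs
    · positivity
    · rfl
  odd_eq_zero n hn := by
    rw [integral_uniformIcc_sub_pow c hr, if_neg (Nat.not_even_iff_odd.mpr hn)]
  even_le p := by
    rw [integral_uniformIcc_sub_pow c hr, if_pos (even_two_mul p)]
    exact_mod_cast pow_div_le_gaussianMoment r p

variable {ι : Type*} [Fintype ι]

def uniformCube (c : ι → ℝ) (r : ℝ) : Measure (ι → ℝ) :=
  Measure.pi fun i => uniformIcc (c i) r

lemma isProbabilityMeasure_uniformCube (c : ι → ℝ) (hr : 0 < r) :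
    IsProbabilityMeasure (uniformCube c r) :=
  have := fun i => isProbabilityMeasure_uniformIcc (c i) hr
  Measure.pi.instIsProbabilityMeasure _

lemma ae_mem_Icc_uniformCube (c : ι → ℝ) (hr : 0 < r) :
    ∀ᵐ x ∂uniformCube c r, ∀ i, x i ∈ Set.Icc (c i - r) (c i + r) :=
  have := fun i => isProbabilityMeasure_uniformIcc (c i) hr
  ae_all_iff.mpr fun i =>
    (Measure.quasiMeasurePreserving_eval _ i).ae (ae_mem_Icc_uniformIcc (c i) r)

lemma integrable_uniformCube_of_continuous (c : ι → ℝ) (hr : 0 < r) {g : (ι → ℝ) → ℝ}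
    (hg : Continuous g) : Integrable g (uniformCube c r) := by
  have := isProbabilityMeasure_uniformCube c hr
  rw [← Measure.restrict_eq_self_of_ae_mem
    ((ae_mem_Icc_uniformCube c hr).mono fun x hx => Set.mem_univ_pi.mpr hx)]
  exact hg.continuousOn.integrableOn_compact (isCompact_univ_pi fun i => isCompact_Icc)

theorem momentsDominatedByGaussian_sum_uniformCube (c : ι → ℝ) (hr : 0 < r) :
    MomentsDominatedByGaussian (fun n => ∫ x, (∑ i, (x i - c i)) ^ n ∂uniformCube c r)
      (Fintype.card ι * (r ^ 2 / 3)) := by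
  have := fun i => isProbabilityMeasure_uniformIcc (c i) hr
  have hindep : iIndepFun (fun i (x : ι → ℝ) => x i - c i) (uniformCube c r) :=
    iIndepFun_pi (X := fun i t => t - c i) fun i => by fun_prop
  have hcoord (i : ι) (n : ℕ) :
      ∫ x, (x i - c i) ^ n ∂uniformCube c r = ∫ t, (t - c i) ^ n ∂uniformIcc (c i) r :=
    integral_comp_eval (μ := fun i => uniformIcc (c i) r) (f := fun t => (t - c i) ^ n)
      (by fun_prop)
  have := isProbabilityMeasure_uniformCube c hr
  rw [show (Fintype.card ι : ℝ) * (r ^ 2 / 3) = ∑ _i : ι, r ^ 2 / 3 by simp]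
  exact hindep.momentsDominatedByGaussian_sum (fun i => by fun_prop)
    (fun i n => integrable_uniformCube_of_continuous c hr (by fun_prop))
    (fun i => by simpa only [hcoord] using momentsDominatedByGaussian_uniformIcc (c i) hr) univ

lemma integral_prod_sub_nonneg_uniformCube (c : ι → ℝ) (hr : 0 < r) {κ : Type*} [Fintype κ]
    (g : κ → ι) : 0 ≤ ∫ x, ∏ u, (x (g u) - c (g u)) ∂uniformCube c r := by
  classical
  have := fun i => isProbabilityMeasure_uniformIcc (c i) hr
  have hprod (x : ι → ℝ) : ∏ u, (x (g u) - c (g u)) = ∏ i, (x i - c i) ^ #{u | g u = i} := by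
    rw [prod_comp (fun i => x i - c i) g]
    refine prod_subset (subset_univ _) fun i _ hi => ?_
    rw [card_eq_zero.mpr (filter_eq_empty_iff.mpr fun u _ (hu : g u = i) =>
      hi (hu ▸ mem_image_of_mem g (mem_univ u))), pow_zero]
  simp_rw [hprod]
  calc 0 ≤ ∏ i, ∫ t, (t - c i) ^ #{u | g u = i} ∂uniformIcc (c i) r :=
        prod_nonneg fun i _ => (momentsDominatedByGaussian_uniformIcc (c i) hr).nonneg _
    _ = _ := (integral_fintype_prod_eq_prod fun i t => (t - c i) ^ #{u | g u = i}).symm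

end Uniform

section Taylor

variable {ι : Type*} [Fintype ι] {r γ C : ℝ} {D : (k : ℕ) → (Fin k → ι) → ℝ}

/-- The order-`k` term of a Taylor expansion at `c`; `D k idx` plays the role of the mixed partial
derivative `∂_{idx 0} ⋯ ∂_{idx (k - 1)} f (c)`. -/
def taylorTerm (c : ι → ℝ) (D : (k : ℕ) → (Fin k → ι) → ℝ) (k : ℕ) (x : ι → ℝ) : ℝ :=
  1 / (k ! : ℝ) * ∑ idx : Fin k → ι, D k idx * ∏ j, (x (idx j) - c (idx j))

lemma continuous_taylorTerm (c : ι → ℝ) (D : (k : ℕ) → (Fin k → ι) → ℝ) (k : ℕ) :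
    Continuous (taylorTerm c D k) := by
  unfold taylorTerm
  fun_prop

lemma abs_taylorTerm_le {c x : ι → ℝ} (hγ : 0 ≤ γ) (hC : 0 ≤ C)
    (hD : ∀ k idx, |D k idx| ≤ γ ^ k * C) (hx : ∀ i, |x i - c i| ≤ r) (k : ℕ) :
    |taylorTerm c D k x| ≤ C * (γ * (Fintype.card ι * r)) ^ k / k ! := by
  calc |taylorTerm c D k x|
      = |∑ idx : Fin k → ι, D k idx * ∏ j, (x (idx j) - c (idx j))| / k ! := by
        rw [taylorTerm, abs_mul, abs_of_pos (by positivity), one_div_mul_eq_div]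
    _ ≤ (∑ idx : Fin k → ι, γ ^ k * C * ∏ j, |x (idx j) - c (idx j)|) / k ! := by
        gcongr
        refine (abs_sum_le_sum_abs _ _).trans (sum_le_sum fun idx _ => ?_)
        rw [abs_mul, abs_prod]
        gcongr
        exact hD k idx
    _ = γ ^ k * C * (∑ i, |x i - c i|) ^ k / k ! := by
        rw [Fintype.sum_pow, mul_sum]
    _ ≤ γ ^ k * C * (∑ _i : ι, r) ^ k / k ! := by
        gcongr
        exact hx _
    _ = C * (γ * (Fintype.card ι * r)) ^ k / k ! := by
        rw [sum_const, card_univ, nsmul_eq_mul, mul_pow]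
        ring

lemma integral_taylorTerm_mul_le (c : ι → ℝ) (hr : 0 < r)
    (hD : ∀ k idx, |D k idx| ≤ γ ^ k * C) (k l : ℕ) :
    ∫ x, taylorTerm c D k x * taylorTerm c D l x ∂uniformCube c r
      ≤ C ^ 2 * (γ ^ (k + l) / (k ! * l !) *
          ∫ x, (∑ i, (x i - c i)) ^ (k + l) ∂uniformCube c r) := by
  set P : (n : ℕ) → (Fin n → ι) → (ι → ℝ) → ℝ :=
    fun n idx x => ∏ j, (x (idx j) - c (idx j))
  have hint (idx : Fin k → ι) (idx' : Fin l → ι) :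
      Integrable (fun x => P k idx x * P l idx' x) (uniformCube c r) :=
    integrable_uniformCube_of_continuous c hr (by fun_prop)
  have hnonneg (idx : Fin k → ι) (idx' : Fin l → ι) :
      0 ≤ ∫ x, P k idx x * P l idx' x ∂uniformCube c r := by
    simpa [P, Fintype.prod_sum_type] using
      integral_prod_sub_nonneg_uniformCube c hr (Sum.elim idx idx')
  calc ∫ x, taylorTerm c D k x * taylorTerm c D l x ∂uniformCube c r
      = 1 / (k ! : ℝ) * (1 / l !) * ∫ x, (∑ idx, D k idx * P k idx x) *
          (∑ idx', D l idx' * P l idx' x) ∂uniformCube c r := by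
        rw [← integral_const_mul]
        congr 1 with x
        rw [taylorTerm, taylorTerm]
        ring
    _ ≤ 1 / (k ! : ℝ) * (1 / l !) * (γ ^ k * C * (γ ^ l * C) *
          ∫ x, (∑ idx, P k idx x) * (∑ idx', P l idx' x) ∂uniformCube c r) := by
        gcongr
        exact integral_sum_mul_sum_le _ _ (hD k) (hD l) hint hnonneg
    _ = _ := by
        have hS (x : ι → ℝ) :
            (∑ idx, P k idx x) * (∑ idx', P l idx' x) = (∑ i, (x i - c i)) ^ (k + l) := by
          rw [pow_add, Fintype.sum_pow, Fintype.sum_pow]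
        simp_rw [hS]
        field_simp
        ring

theorem integral_sq_sum_taylorTerm_le (c : ι → ℝ) (hr : 0 < r) (hγ : 0 ≤ γ)
    (hD : ∀ k idx, |D k idx| ≤ γ ^ k * C) (K M : ℕ) :
    ∫ x, (∑ k ∈ Ico K M, taylorTerm c D k x) ^ 2 ∂uniformCube c r
      ≤ (2 * γ ^ 2 * Fintype.card ι * r ^ 2 / 3) ^ K * (C ^ 2 / K !) *
          Real.exp (2 * γ ^ 2 * Fintype.card ι * r ^ 2 / 3) := by
  have hint (k l : ℕ) :
      Integrable (fun x => taylorTerm c D k x * taylorTerm c D l x) (uniformCube c r) :=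
    integrable_uniformCube_of_continuous c hr
      ((continuous_taylorTerm c D k).mul (continuous_taylorTerm c D l))
  have hσ : 2 * γ ^ 2 * Fintype.card ι * r ^ 2 / 3
      = 2 * γ ^ 2 * (Fintype.card ι * (r ^ 2 / 3)) := by
    ring
  calc ∫ x, (∑ k ∈ Ico K M, taylorTerm c D k x) ^ 2 ∂uniformCube c r
      = ∑ k ∈ Ico K M, ∑ l ∈ Ico K M,
          ∫ x, taylorTerm c D k x * taylorTerm c D l x ∂uniformCube c r := by
        simp_rw [sq, sum_mul_sum]
        rw [integral_finsetSum _ fun k _ => integrable_finsetSum _ fun l _ => hint k l]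
        exact sum_congr rfl fun k _ => integral_finsetSum _ fun l _ => hint k l
    _ ≤ ∑ k ∈ Ico K M, ∑ l ∈ Ico K M, C ^ 2 * (γ ^ (k + l) / (k ! * l !) *
          ∫ x, (∑ i, (x i - c i)) ^ (k + l) ∂uniformCube c r) :=
        sum_le_sum fun k _ => sum_le_sum fun l _ => integral_taylorTerm_mul_le c hr hD k l
    _ ≤ C ^ 2 * ((2 * γ ^ 2 * (Fintype.card ι * (r ^ 2 / 3))) ^ K / K ! *
          Real.exp (2 * γ ^ 2 * (Fintype.card ι * (r ^ 2 / 3)))) := by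
        simp_rw [← mul_sum]
        gcongr
        exact (momentsDominatedByGaussian_sum_uniformCube c hr).sum_Ico_sum_Ico_le
          (by positivity) hγ K M
    _ = _ := by
        rw [hσ]
        ring

end Taylor

end

theorem taylor_surrogate_mean_square_error_general (m κ : ℕ)
    (αstar : Fin m → ℝ) (r γ C : ℝ) (hr : 0 < r) (hγ : 0 ≤ γ) (hC : 0 ≤ C)
    (f : (Fin m → ℝ) → ℝ)
    (hderiv : ∀ (k : ℕ) (idx : Fin k → Fin m),
      |iteratedFDeriv ℝ k f αstar (fun j => Pi.single (idx j) (1 : ℝ))| ≤ γ ^ k * C)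
    (htaylor : ∀ α : Fin m → ℝ, (∀ i, |α i - αstar i| ≤ r) →
      f α = ∑' k : ℕ, (1 / (k.factorial : ℝ)) *
          ∑ idx : Fin k → Fin m,
            iteratedFDeriv ℝ k f αstar (fun j => Pi.single (idx j) (1 : ℝ)) *
              ∏ j, (α (idx j) - αstar (idx j))) :
    ∫ α, (f α - ∑ k ∈ Finset.range (κ + 1), (1 / (k.factorial : ℝ)) *
            ∑ idx : Fin k → Fin m,
              iteratedFDeriv ℝ k f αstar (fun j => Pi.single (idx j) (1 : ℝ)) *
                ∏ j, (α (idx j) - αstar (idx j))) ^ 2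
          ∂(Measure.pi fun i =>
            (ENNReal.ofReal (2 * r))⁻¹ •
              volume.restrict (Set.Icc (αstar i - r) (αstar i + r)))
      ≤ (2 * γ ^ 2 * (m : ℝ) * r ^ 2 / 3) ^ (κ + 1) * (C ^ 2 / ((κ + 1).factorial : ℝ)) *
          Real.exp (2 * γ ^ 2 * (m : ℝ) * r ^ 2 / 3) := by
  set D : (k : ℕ) → (Fin k → Fin m) → ℝ :=
    fun k idx => iteratedFDeriv ℝ k f αstar (fun j => Pi.single (idx j) 1)
  set a := taylorTerm αstar D
  have := isProbabilityMeasure_uniformCube αstar hr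
  have hcube : ∀ᵐ α ∂uniformCube αstar r, ∀ i, |α i - αstar i| ≤ r :=
    (ae_mem_Icc_uniformCube αstar hr).mono fun α hα i =>
      abs_sub_le_iff.mpr ⟨by linarith [(hα i).2], by linarith [(hα i).1]⟩
  have hb : Summable fun k => C * (γ * (m * r)) ^ k / k ! := by
    simpa only [mul_div_assoc] using (Real.summable_pow_div_factorial _).mul_left C
  have hab : ∀ᵐ α ∂uniformCube αstar r, ∀ k, |a k α| ≤ C * (γ * (m * r)) ^ k / k ! :=
    hcube.mono fun α hα => by simpa using abs_taylorTerm_le hγ hC hderiv hα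
  have hrem : ∀ᵐ α ∂uniformCube αstar r,
      f α - ∑ k ∈ range (κ + 1), a k α = ∑' j, a (j + (κ + 1)) α := by
    filter_upwards [hcube, hab] with α hα hαb
    have hf : f α = ∑' k, a k α := htaylor α hα
    rw [hf, ← (hb.of_norm_bounded hαb).sum_add_tsum_nat_add (κ + 1), add_sub_cancel_left]
  change ∫ α, (f α - ∑ k ∈ range (κ + 1), a k α) ^ 2 ∂uniformCube αstar r ≤ _
  rw [integral_congr_ae (hrem.mono fun α h => by rw [h])]
  refine integral_sq_tsum_le (fun j => (continuous_taylorTerm _ _ _).aestronglyMeasurable)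
    ((summable_nat_add_iff (κ + 1)).mpr hb) (hab.mono fun α h j => h _) fun N => ?_
  simpa [sum_Ico_eq_sum_range, add_comm] using
    integral_sq_sum_taylorTerm_le αstar hr hγ hderiv (κ + 1) (κ + 1 + N)

/-- Mean square error of the order-`κ` Taylor surrogate: if `f` is
infinitely differentiable, its mixed partial derivatives at `α*` of every order `k`
(encoded via the `k`-th Fréchet derivative evaluated on coordinate directions) are
bounded in absolute value by `γ^k C`, and `f` agrees with its Taylor series at `α*` on
the hypercube `V(α*, r)`, then for `α` uniform on `V(α*, r)` (product of uniform
distributions on the intervals `[α*_i − r, α*_i + r]`),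
`E[(f(α) − T_κ f(α))²] ≤ (2γ²mr²/3)^{κ+1} (C²/(κ+1)!) e^{2γ²mr²/3}`. -/
theorem taylor_surrogate_mean_square_error (m κ : ℕ) (hm : 1 ≤ m)
    (αstar : Fin m → ℝ) (r γ C : ℝ) (hr : 0 < r) (hγ : 0 ≤ γ) (hC : 0 ≤ C)
    (f : (Fin m → ℝ) → ℝ) (hf : ContDiff ℝ ∞ f)
    (hderiv : ∀ (k : ℕ) (idx : Fin k → Fin m),
      |iteratedFDeriv ℝ k f αstar (fun j => Pi.single (idx j) (1 : ℝ))| ≤ γ ^ k * C)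
    (htaylor : ∀ α : Fin m → ℝ, (∀ i, |α i - αstar i| ≤ r) →
      f α = ∑' k : ℕ, (1 / (k.factorial : ℝ)) *
          ∑ idx : Fin k → Fin m,
            iteratedFDeriv ℝ k f αstar (fun j => Pi.single (idx j) (1 : ℝ)) *
              ∏ j, (α (idx j) - αstar (idx j))) :
    ∫ α, (f α - ∑ k ∈ Finset.range (κ + 1), (1 / (k.factorial : ℝ)) *
            ∑ idx : Fin k → Fin m,
              iteratedFDeriv ℝ k f αstar (fun j => Pi.single (idx j) (1 : ℝ)) *
                ∏ j, (α (idx j) - αstar (idx j))) ^ 2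
          ∂(Measure.pi fun i =>
            (ENNReal.ofReal (2 * r))⁻¹ •
              volume.restrict (Set.Icc (αstar i - r) (αstar i + r)))
      ≤ (2 * γ ^ 2 * (m : ℝ) * r ^ 2 / 3) ^ (κ + 1) * (C ^ 2 / ((κ + 1).factorial : ℝ)) *
          Real.exp (2 * γ ^ 2 * (m : ℝ) * r ^ 2 / 3) :=
  taylor_surrogate_mean_square_error_general m κ αstar r γ C hr hγ hC f hderiv htaylor
end

section
/- For all natural numbers m and κ with 1 ≤ κ ≤ m − 1, the partial sum of binomial coefficients satisfies Σ_{k=0}^{κ} C(m + k − 1, k) ≤ (e (m + κ − 1) / κ)^κ, where e is Euler's number and C(n, k) denotes the binomial coefficient. -/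
/-! Each `C(m + k - 1, k)` with `k ≤ κ` is at most `C(n, k)` for `n = m + κ - 1`, and the partial
sum `∑_{k ≤ κ} C(n, k)` is bounded by the usual Chernoff-type trick: weighting the `k`-th term by
`(κ / n)^k (n / κ)^κ ≥ 1` and completing the binomial sum gives at most
`(n / κ)^κ (1 + κ / n)^n ≤ (n / κ)^κ e^κ`. -/

open Finset

theorem sum_range_choose_add_sub_one_le (m κ : ℕ) :
    ∑ k ∈ range (κ + 1), (m + k - 1).choose k ≤ ∑ k ∈ range (κ + 1), (m + κ - 1).choose k :=
  sum_le_sum fun k hk => Nat.choose_le_choose k (by grind)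

theorem sum_range_choose_mul_pow_le_one_add_pow {n κ : ℕ} (hκn : κ ≤ n) {x : ℝ} (hx : 0 ≤ x) :
    ∑ k ∈ range (κ + 1), (n.choose k : ℝ) * x ^ k ≤ (1 + x) ^ n := by
  calc ∑ k ∈ range (κ + 1), (n.choose k : ℝ) * x ^ k
      ≤ ∑ k ∈ range (n + 1), (n.choose k : ℝ) * x ^ k :=
        sum_le_sum_of_subset_of_nonneg (range_subset_range.mpr (by omega)) fun k _ _ => by positivity
    _ = (1 + x) ^ n := by
        rw [add_comm 1 x, add_pow]; exact sum_congr rfl fun k _ => by ring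

theorem sum_range_choose_le_exp_mul_div_pow {n κ : ℕ} (hκn : κ ≤ n) :
    (∑ k ∈ range (κ + 1), n.choose k : ℝ) ≤ (Real.exp 1 * n / κ) ^ κ := by
  rcases Nat.eq_zero_or_pos κ with rfl | hκ
  · simp
  have hκ' : (0 : ℝ) < κ := by exact_mod_cast hκ
  have hn : (0 : ℝ) < n := hκ'.trans_le (by exact_mod_cast hκn)
  have hq : 1 ≤ (n : ℝ) / κ := (one_le_div hκ').mpr (by exact_mod_cast hκn)
  have weight (k : ℕ) (hk : k ∈ range (κ + 1)) :
      (n.choose k : ℝ) ≤ n.choose k * (κ / n) ^ k * (n / κ) ^ κ :=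
    calc (n.choose k : ℝ) = n.choose k * (κ / n) ^ k * (n / κ) ^ k := by
          rw [mul_assoc, ← mul_pow, div_mul_div_cancel₀ hn.ne', div_self hκ'.ne', one_pow, mul_one]
      _ ≤ n.choose k * (κ / n) ^ k * (n / κ) ^ κ := by
          gcongr
          exact Nat.lt_succ_iff.mp (mem_range.mp hk)
  calc (∑ k ∈ range (κ + 1), n.choose k : ℝ)
      ≤ (∑ k ∈ range (κ + 1), n.choose k * (κ / n : ℝ) ^ k) * (n / κ) ^ κ := by
        rw [sum_mul]; exact sum_le_sum weight
    _ ≤ (1 + κ / n : ℝ) ^ n * (n / κ) ^ κ := by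
        gcongr; exact sum_range_choose_mul_pow_le_one_add_pow hκn (by positivity)
    _ ≤ Real.exp κ * (n / κ) ^ κ := by
        gcongr
        simpa [neg_div] using Real.one_sub_div_pow_le_exp_neg (n := n) (t := -κ) (by linarith)
    _ = (Real.exp 1 * n / κ) ^ κ := by
        rw [← Real.exp_one_pow, ← mul_pow, mul_div_assoc]

theorem sum_choose_multiset_le_general (m κ : ℕ) (hκm : κ + 1 ≤ m) :
    ((∑ k ∈ Finset.range (κ + 1), (m + k - 1).choose k : ℕ) : ℝ)
      ≤ (Real.exp 1 * ((m : ℝ) + (κ : ℝ) - 1) / (κ : ℝ)) ^ κ := by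
  have hcast : ((m + κ - 1 : ℕ) : ℝ) = (m : ℝ) + κ - 1 := by
    rw [Nat.cast_sub (by omega)]; push_cast; ring
  calc ((∑ k ∈ range (κ + 1), (m + k - 1).choose k : ℕ) : ℝ)
      ≤ ((∑ k ∈ range (κ + 1), (m + κ - 1).choose k : ℕ) : ℝ) := by
        exact_mod_cast sum_range_choose_add_sub_one_le m κ
    _ ≤ (Real.exp 1 * ((m : ℝ) + κ - 1) / κ) ^ κ := by
        rw [← hcast]; exact_mod_cast sum_range_choose_le_exp_mul_div_pow (by omega)

/-- For all natural numbers `m` and `κ` with `1 ≤ κ ≤ m − 1`, the partial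
sum of binomial coefficients satisfies
`Σ_{k=0}^{κ} C(m + k − 1, k) ≤ (e (m + κ − 1) / κ)^κ`. -/
theorem sum_choose_multiset_le (m κ : ℕ) (hκ : 1 ≤ κ) (hκm : κ + 1 ≤ m) :
    ((∑ k ∈ Finset.range (κ + 1), (m + k - 1).choose k : ℕ) : ℝ)
      ≤ (Real.exp 1 * ((m : ℝ) + (κ : ℝ) - 1) / (κ : ℝ)) ^ κ :=
  sum_choose_multiset_le_general m κ hκm
end

section
/- Let N ≥ 1 and let ρ, O, V_1, …, V_m, H_1, …, H_m be N × N complex matrices such that ρ is positive semidefinite with trace 1, O is Hermitian, each H_l is Hermitian, and each V_l is unitary. For α ∈ ℝ^m define U(α) = V_1 exp(−i α_1 H_1) · V_2 exp(−i α_2 H_2) ⋯ V_m exp(−i α_m H_m) and f(α) = Tr(ρ · U(α)† O U(α)) (a real-valued function of α). Then for every multi-index (k_1, …, k_m) ∈ ℕ^m with k_1 + ⋯ + k_m = k and every α ∈ ℝ^m, the mixed partial derivative satisfies |(∂^{k_1}/∂α_1^{k_1}) ⋯ (∂^{k_m}/∂α_m^{k_m}) f(α)| ≤ ‖O‖ ·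 ∏_{l=1}^{m} (2 ‖H_l‖)^{k_l}, and consequently |∂^{(k_1,…,k_m)} f(α)| ≤ ‖O‖ · (2 max_l ‖H_l‖)^k. -/
open scoped Matrix ComplexOrder

/-- The spectral norm (ℓ² → ℓ² operator norm) of a square complex matrix. -/
noncomputable def specNorm {N : ℕ} (A : Matrix (Fin N) (Fin N) ℂ) : ℝ :=
  ‖Matrix.toEuclideanCLM (𝕜 := ℂ) A‖

/-!
Differentiating `exp(-i αₗ Hₗ)` in `αₗ` pulls down the generator `Bₗ = -i Hₗ` inside the
product. So a partial derivative of a term `Re Tr(ρ W_a† O W_b)`, where `W_a` is `U` with `a l`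
generators inserted in layer `l`, is the sum of the two terms with one more generator in `W_a`
or in `W_b`. After `k` derivatives there are `2ᵏ` such terms, and each is at most
`‖O‖ ∏ₗ ‖Hₗ‖^{kₗ}` in absolute value: unitaries and `exp(t Bₗ)` have norm one, and
`|Re Tr(ρ X)| ≤ ‖X‖` for a density matrix `ρ`.
-/

open scoped ContDiff Matrix.Norms.L2Operator
open Function NormedSpace

theorem Finset.prod_pow_update_add_one {ι M : Type*} [Fintype ι] [DecidableEq ι] [CommMonoid M]
    (g : ι → M) (a : ι → ℕ) (l : ι) :
    ∏ i, g i ^ update a l (a l + 1) i = (∏ i, g i ^ a i) * g l := by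
  simp_rw [apply_update (fun i n => g i ^ n), Finset.prod_update_of_mem (Finset.mem_univ l),
    Finset.prod_eq_mul_prod_sdiff_singleton_of_mem (Finset.mem_univ l) (fun i => g i ^ a i),
    pow_succ]
  exact mul_right_comm _ _ _

theorem Finset.prod_comp_eq_prod_pow_card {ι κ M : Type*} [Fintype ι] [Fintype κ] [DecidableEq κ]
    [CommMonoid M] (f : κ → M) (g : ι → κ) :
    ∏ j, f (g j) = ∏ l, f l ^ (Finset.univ.filter fun j => g j = l).card := by
  rw [← Finset.prod_fiberwise Finset.univ g (fun j => f (g j))]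
  refine Finset.prod_congr rfl fun l _ => ?_
  rw [Finset.prod_congr rfl fun j hj => congrArg f (Finset.mem_filter.mp hj).2, Finset.prod_const]

theorem prod_pow_le_iSup_pow_sum {ι : Type*} [Fintype ι] {h : ι → ℝ} (hh : ∀ i, 0 ≤ h i)
    (k : ι → ℕ) : ∏ i, h i ^ k i ≤ (⨆ i, h i) ^ ∑ i, k i := by
  rw [← Finset.prod_pow_eq_pow_sum]
  exact Finset.prod_le_prod (fun i _ => pow_nonneg (hh i) _) fun i _ =>
    pow_le_pow_left₀ (hh i) (le_ciSup (Set.finite_range h).bddAbove i) _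

section Calculus

variable {𝕜 E F : Type*} [NontriviallyNormedField 𝕜] [NormedAddCommGroup E] [NormedSpace 𝕜 E]
  [NormedAddCommGroup F] [NormedSpace 𝕜 F]

theorem iteratedFDeriv_succ_apply_eq_iteratedFDeriv_fderiv_apply {f : E → F}
    (hf : ContDiff 𝕜 ∞ f) {k : ℕ} (x : E) (v : Fin (k + 1) → E) :
    iteratedFDeriv 𝕜 (k + 1) f x v
      = iteratedFDeriv 𝕜 k (fun y => fderiv 𝕜 f y (v (Fin.last k))) x (Fin.init v) := by
  rw [iteratedFDeriv_succ_apply_right]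
  change _ = iteratedFDeriv 𝕜 k (ContinuousLinearMap.apply 𝕜 F (v (Fin.last k)) ∘ fderiv 𝕜 f) x _
  rw [ContinuousLinearMap.iteratedFDeriv_comp_left _ (hf.fderiv_right (m := ∞) (by simp)).contDiffAt
    (by exact_mod_cast le_top)]
  rfl

theorem contDiff_list_prod_map {ι 𝔸 : Type*} [NormedRing 𝔸] [NormedAlgebra 𝕜 𝔸]
    {n : WithTop ℕ∞} {f : ι → E → 𝔸} (hf : ∀ i, ContDiff 𝕜 n (f i)) (L : List ι) :
    ContDiff 𝕜 n fun x => (L.map fun i => f i x).prod := by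
  induction L with
  | nil => exact contDiff_const
  | cons i L ih => exact (hf i).mul ih

theorem hasDerivAt_list_prod_update {ι 𝔸 : Type*} [DecidableEq ι] [NormedRing 𝔸]
    [NormedAlgebra 𝕜 𝔸] {F : ι → 𝕜 → 𝔸} (α : ι → 𝕜) {l : ι} {y : 𝔸}
    (hF : HasDerivAt (F l) y (α l)) {L : List ι} (hL : L.Nodup) (hl : l ∈ L) :
    HasDerivAt (fun s => (L.map fun i => F i (update α l s i)).prod)
      (L.map (update (fun i => F i (α i)) l y)).prod (α l) := by
  induction L with
  | nil => exact absurd hl List.not_mem_nil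
  | cons i L ih =>
    obtain ⟨hiL, hL⟩ := List.nodup_cons.mp hL
    simp only [List.map_cons, List.prod_cons]
    by_cases hil : i = l
    · subst hil
      have hrest : ∀ s, (L.map fun j => F j (update α i s j))
          = L.map (update (fun j => F j (α j)) i y) :=
        fun s => List.map_congr_left fun j hj => by
          simp [update_of_ne (ne_of_mem_of_not_mem hj hiL)]
      simp only [hrest, update_self]
      exact hF.mul_const _
    · simp only [update_of_ne hil]
      exact (ih hL ((List.mem_cons.mp hl).resolve_left (Ne.symm hil))).const_mul _

theorem fderiv_apply_single_eq_of_hasDerivAt_update {ι : Type*} [Fintype ι] [DecidableEq ι]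
    {f : (ι → 𝕜) → F} {x : ι → 𝕜} (hf : DifferentiableAt 𝕜 f x) {i : ι} {y : F}
    (h : HasDerivAt (fun s => f (update x i s)) y (x i)) :
    fderiv 𝕜 f x (Pi.single i 1) = y := by
  have hf' : HasFDerivAt f (fderiv 𝕜 f x) (update x i (x i)) := by
    rw [update_eq_self]; exact hf.hasFDerivAt
  exact (hf'.comp_hasDerivAt (x i) (hasDerivAt_update x i (x i))).unique h

end Calculus

theorem abs_iteratedFDeriv_apply_le_of_fderiv_apply_eq_add
    {E ι D : Type*} [NormedAddCommGroup E] [NormedSpace ℝ E]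
    {g : ι → E → ℝ} (hg : ∀ i, ContDiff ℝ ∞ (g i)) {C : ι → ℝ} (hC : ∀ i x, |g i x| ≤ C i)
    (e : D → E) {c : D → ℝ} (hc : ∀ d, 0 ≤ c d)
    (hsplit : ∀ i d, ∃ j₁ j₂, (∀ x, fderiv ℝ (g i) x (e d) = g j₁ x + g j₂ x) ∧
      C j₁ ≤ c d * C i ∧ C j₂ ≤ c d * C i)
    (k : ℕ) (i : ι) (x : E) (idx : Fin k → D) :
    |iteratedFDeriv ℝ k (g i) x (fun j => e (idx j))| ≤ C i * ∏ j, 2 * c (idx j) := by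
  induction k generalizing i with
  | zero => simpa using hC i x
  | succ k ih =>
    obtain ⟨j₁, j₂, hderiv, hC₁, hC₂⟩ := hsplit i (idx (Fin.last k))
    have hP : 0 ≤ ∏ j : Fin k, 2 * c (idx j.castSucc) :=
      Finset.prod_nonneg fun j _ => mul_nonneg zero_le_two (hc _)
    rw [iteratedFDeriv_succ_apply_eq_iteratedFDeriv_fderiv_apply (hg i), funext hderiv,
      fun_iteratedFDeriv_add_apply ((hg j₁).contDiffAt.of_le (by exact_mod_cast le_top))
        ((hg j₂).contDiffAt.of_le (by exact_mod_cast le_top)),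
      add_apply, Fin.prod_univ_castSucc]
    calc _ ≤ C j₁ * ∏ j : Fin k, 2 * c (idx j.castSucc)
          + C j₂ * ∏ j : Fin k, 2 * c (idx j.castSucc) :=
          (abs_add_le _ _).trans (add_le_add (ih j₁ _) (ih j₂ _))
      _ ≤ _ := by nlinarith

theorem CStarRing.norm_one_le {E : Type*} [NormedRing E] [StarRing E] [CStarRing E] :
    ‖(1 : E)‖ ≤ 1 := by
  rcases subsingleton_or_nontrivial E with hE | hE
  · simp [Subsingleton.elim (1 : E) 0]
  · exact CStarRing.norm_one.le

theorem CStarRing.norm_pow_le {E : Type*} [NormedRing E] [StarRing E] [CStarRing E] (a : E) :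
    ∀ n : ℕ, ‖a ^ n‖ ≤ ‖a‖ ^ n
  | 0 => by simpa using norm_one_le
  | n + 1 => norm_pow_le' a n.succ_pos

theorem CStarRing.norm_list_prod_map_le {E ι : Type*} [NormedRing E] [StarRing E] [CStarRing E]
    {f : ι → E} {c : ι → ℝ} (L : List ι) (h : ∀ i, ‖f i‖ ≤ c i) :
    ‖(L.map f).prod‖ ≤ (L.map c).prod := by
  induction L with
  | nil => exact norm_one_le
  | cons i L ih =>
    exact (norm_mul_le _ _).trans
      (mul_le_mul (h i) ih (norm_nonneg _) ((norm_nonneg _).trans (h i)))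

theorem contDiff_exp_smul_const {𝔸 : Type*} [NormedRing 𝔸] [NormedAlgebra ℝ 𝔸] [CompleteSpace 𝔸]
    (B : 𝔸) : ContDiff ℝ ∞ (fun t : ℝ => exp (t • B)) := by
  refine contDiff_iff_contDiffAt.2 fun t => ?_
  have hexp : AnalyticAt ℝ exp (t • B) :=
    analyticAt_exp_of_mem_ball _ (by simp [expSeries_radius_eq_top])
  have hsmul : AnalyticAt ℝ (fun s : ℝ => s • B) t := by fun_prop
  exact (hexp.comp_of_eq hsmul rfl).contDiffAt.of_le le_top

section Circuit

variable {A : Type*} [CStarAlgebra A] {m : ℕ}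

theorem exp_smul_mem_unitary {B : A} (hB : B ∈ skewAdjoint A) (t : ℝ) :
    exp (t • B) ∈ unitary A :=
  -- the library lemma is stated for `ℚ`-algebras; a `ℂ`-algebra is one by restricting scalars
  let +nondep : NormedAlgebra ℚ A := .restrictScalars ℚ ℂ A
  exp_mem_unitary_of_mem_skewAdjoint (skewAdjoint.smul_mem t hB)

/-- The layer `V exp(t B)` differentiated `n` times in `t`. -/
noncomputable def circuitLayer (V B : A) (n : ℕ) (t : ℝ) : A := V * B ^ n * exp (t • B)

theorem hasDerivAt_circuitLayer (V B : A) (n : ℕ) (t : ℝ) :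
    HasDerivAt (circuitLayer V B n) (circuitLayer V B (n + 1) t) t := by
  have h := (hasDerivAt_exp_smul_const' B t).const_mul (V * B ^ n)
  rwa [← mul_assoc, mul_assoc V, ← pow_succ] at h

theorem contDiff_circuitLayer (V B : A) (n : ℕ) : ContDiff ℝ ∞ (circuitLayer V B n) :=
  contDiff_const.mul (contDiff_exp_smul_const B)

theorem norm_circuitLayer_le {V B : A} (hV : V ∈ unitary A) (hB : B ∈ skewAdjoint A) (n : ℕ)
    (t : ℝ) : ‖circuitLayer V B n t‖ ≤ ‖B‖ ^ n := by
  rw [circuitLayer, mul_assoc, CStarRing.norm_mem_unitary_mul _ hV,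
    CStarRing.norm_mul_mem_unitary _ (exp_smul_mem_unitary hB t)]
  exact CStarRing.norm_pow_le B n

/-- The circuit `∏ₗ Vₗ exp(αₗ Bₗ)` with its `l`-th layer differentiated `b l` times. -/
noncomputable def circuit (V B : Fin m → A) (b : Fin m → ℕ) (α : Fin m → ℝ) : A :=
  ((List.finRange m).map fun l => circuitLayer (V l) (B l) (b l) (α l)).prod

theorem contDiff_circuit (V B : Fin m → A) (b : Fin m → ℕ) : ContDiff ℝ ∞ (circuit V B b) :=
  contDiff_list_prod_map (fun l => (contDiff_circuitLayer (V l) (B l) (b l)).comp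
    (contDiff_apply ℝ ℝ l)) _

theorem hasDerivAt_circuit_update (V B : Fin m → A) (b : Fin m → ℕ) (α : Fin m → ℝ)
    (l : Fin m) :
    HasDerivAt (fun s => circuit V B b (update α l s)) (circuit V B (update b l (b l + 1)) α)
      (α l) := by
  have h := hasDerivAt_list_prod_update α (F := fun i => circuitLayer (V i) (B i) (b i))
    (hasDerivAt_circuitLayer (V l) (B l) (b l) (α l)) (List.nodup_finRange m)
    (List.mem_finRange l)
  refine h.congr_deriv (congrArg List.prod (List.map_congr_left fun i _ => ?_))
  exact (apply_update (fun i n => circuitLayer (V i) (B i) n (α i)) b l (b l + 1) i).symm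

theorem circuit_zero_neg_I_smul (V H : Fin m → A) (α : Fin m → ℝ) :
    circuit V (fun l => (-Complex.I) • H l) 0 α
      = ((List.finRange m).map fun l => V l * exp ((-(Complex.I * (α l : ℂ))) • H l)).prod := by
  refine congrArg List.prod (List.map_congr_left fun l _ => ?_)
  simp only [circuitLayer, Pi.zero_apply, pow_zero, mul_one, smul_smul, ← Complex.coe_smul]
  congr 3
  ring

theorem norm_circuit_le {V B : Fin m → A} (hV : ∀ l, V l ∈ unitary A)
    (hB : ∀ l, B l ∈ skewAdjoint A) (b : Fin m → ℕ) (α : Fin m → ℝ) :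
    ‖circuit V B b α‖ ≤ ∏ l, ‖B l‖ ^ b l := by
  rw [Fin.prod_univ_def]
  exact CStarRing.norm_list_prod_map_le _ fun l => norm_circuitLayer_le (hV l) (hB l) _ _

noncomputable def circuitExpectation (φ : A →L[ℝ] ℝ) (O : A) (V B : Fin m → A)
    (a b : Fin m → ℕ) (α : Fin m → ℝ) : ℝ :=
  φ (star (circuit V B a α) * O * circuit V B b α)

variable (φ : A →L[ℝ] ℝ) (O : A) (V B : Fin m → A)

theorem contDiff_circuitExpectation (a b : Fin m → ℕ) :
    ContDiff ℝ ∞ (circuitExpectation φ O V B a b) :=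
  φ.contDiff.comp ((((starL' ℝ : A ≃L[ℝ] A).contDiff.comp (contDiff_circuit V B a)).mul
    contDiff_const).mul (contDiff_circuit V B b))

theorem fderiv_circuitExpectation_single (a b : Fin m → ℕ) (α : Fin m → ℝ) (l : Fin m) :
    fderiv ℝ (circuitExpectation φ O V B a b) α (Pi.single l 1)
      = circuitExpectation φ O V B (update a l (a l + 1)) b α
        + circuitExpectation φ O V B a (update b l (b l + 1)) α := by
  refine fderiv_apply_single_eq_of_hasDerivAt_update
    ((contDiff_circuitExpectation φ O V B a b).differentiable (by simp)).differentiableAt ?_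
  have h := φ.hasFDerivAt.comp_hasDerivAt _
    (((hasDerivAt_circuit_update V B a α l).star.mul_const O).mul
      (hasDerivAt_circuit_update V B b α l))
  refine h.congr_deriv ?_
  rw [update_eq_self, map_add]
  rfl

theorem abs_circuitExpectation_le (hV : ∀ l, V l ∈ unitary A) (hB : ∀ l, B l ∈ skewAdjoint A)
    (a b : Fin m → ℕ) (α : Fin m → ℝ) :
    |circuitExpectation φ O V B a b α|
      ≤ ‖φ‖ * ‖O‖ * ((∏ l, ‖B l‖ ^ a l) * ∏ l, ‖B l‖ ^ b l) := by
  have ha := norm_circuit_le hV hB a α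
  have hb := norm_circuit_le hV hB b α
  calc |circuitExpectation φ O V B a b α|
      ≤ ‖φ‖ * (‖circuit V B a α‖ * ‖O‖ * ‖circuit V B b α‖) := by
        rw [← Real.norm_eq_abs, circuitExpectation]
        refine (φ.le_opNorm _).trans (mul_le_mul_of_nonneg_left ?_ (norm_nonneg φ))
        refine (norm_mul_le _ _).trans (mul_le_mul_of_nonneg_right ?_ (norm_nonneg _))
        exact (norm_mul_le _ _).trans_eq (by rw [norm_star])
    _ = ‖φ‖ * ‖O‖ * (‖circuit V B a α‖ * ‖circuit V B b α‖) := by ring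
    _ ≤ _ := by gcongr

theorem abs_iteratedFDeriv_circuitExpectation_le (hV : ∀ l, V l ∈ unitary A)
    (hB : ∀ l, B l ∈ skewAdjoint A) (k : ℕ) (idx : Fin k → Fin m) (α : Fin m → ℝ) :
    |iteratedFDeriv ℝ k (circuitExpectation φ O V B 0 0) α (fun j => Pi.single (idx j) 1)|
      ≤ ‖φ‖ * ‖O‖ * ∏ j, 2 * ‖B (idx j)‖ := by
  simpa using abs_iteratedFDeriv_apply_le_of_fderiv_apply_eq_add
    (g := fun p : (Fin m → ℕ) × (Fin m → ℕ) => circuitExpectation φ O V B p.1 p.2)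
    (C := fun p => ‖φ‖ * ‖O‖ * ((∏ l, ‖B l‖ ^ p.1 l) * ∏ l, ‖B l‖ ^ p.2 l))
    (c := fun l => ‖B l‖)
    (fun p => contDiff_circuitExpectation φ O V B p.1 p.2)
    (fun p => abs_circuitExpectation_le φ O V B hV hB p.1 p.2)
    (fun l => Pi.single l 1) (fun l => norm_nonneg _)
    (fun ⟨a, b⟩ l => ⟨(update a l (a l + 1), b), (a, update b l (b l + 1)),
      fun α => fderiv_circuitExpectation_single φ O V B a b α l,
      le_of_eq (by simp only [Finset.prod_pow_update_add_one]; ring),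
      le_of_eq (by simp only [Finset.prod_pow_update_add_one]; ring)⟩)
    k (0, 0) α idx

end Circuit

namespace Matrix

variable {n : Type*} [Fintype n] [DecidableEq n]

theorem l2_opNorm_entry_le (A : Matrix n n ℂ) (i j : n) : ‖A i j‖ ≤ ‖A‖ := by
  have h : A i j = toEuclideanCLM (n := n) (𝕜 := ℂ) A (EuclideanSpace.single j 1) i := by
    simp [EuclideanSpace.single, mulVec_single]
  calc ‖A i j‖ ≤ ‖toEuclideanCLM (n := n) (𝕜 := ℂ) A (EuclideanSpace.single j 1)‖ :=
        h ▸ PiLp.norm_apply_le _ i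
    _ ≤ ‖A‖ * ‖(EuclideanSpace.single j 1 : EuclideanSpace ℂ n)‖ :=
        (toEuclideanCLM (n := n) (𝕜 := ℂ) A).le_opNorm _
    _ = ‖A‖ := by simp

theorem PosSemidef.norm_trace_mul_le {ρ : Matrix n n ℂ} (hρ : ρ.PosSemidef) (X : Matrix n n ℂ) :
    ‖(ρ * X).trace‖ ≤ ‖ρ.trace‖ * ‖X‖ := by
  obtain ⟨ev, hev, htrρ, W, hW, rfl⟩ : ∃ ev : n → ℝ, (∀ i, 0 ≤ ev i) ∧ ρ.trace = ∑ i, (ev i : ℂ) ∧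
      ∃ W ∈ unitaryGroup n ℂ, ρ = W * diagonal (fun i => (ev i : ℂ)) * star W :=
    ⟨_, hρ.eigenvalues_nonneg, hρ.1.trace_eq_sum_eigenvalues, _, hρ.1.eigenvectorUnitary.2,
      hρ.1.spectral_theorem⟩
  have htr : (W * diagonal (fun i => (ev i : ℂ)) * star W * X).trace
      = ∑ i, (ev i : ℂ) * (star W * X * W) i i := by
    rw [mul_assoc, mul_assoc, trace_mul_comm, mul_assoc]
    simp only [trace, diag, mul_assoc, diagonal_mul]
  have hconj : ‖star W * X * W‖ = ‖X‖ := by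
    rw [CStarRing.norm_mul_mem_unitary _ hW, CStarRing.norm_mem_unitary_mul _ (Unitary.star_mem hW)]
  rw [htrρ, ← Complex.ofReal_sum, Complex.norm_real,
    Real.norm_of_nonneg (Finset.sum_nonneg fun i _ => hev i), Finset.sum_mul, htr]
  refine (norm_sum_le _ _).trans (Finset.sum_le_sum fun i _ => ?_)
  rw [norm_mul, Complex.norm_real, Real.norm_of_nonneg (hev i), ← hconj]
  exact mul_le_mul_of_nonneg_left (l2_opNorm_entry_le _ i i) (hev i)

noncomputable def reTraceMulCLM (ρ : Matrix n n ℂ) : Matrix n n ℂ →L[ℝ] ℝ :=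
  LinearMap.toContinuousLinearMap
    (Complex.reLm ∘ₗ (traceLinearMap n ℂ ℂ).restrictScalars ℝ ∘ₗ LinearMap.mulLeft ℝ ρ)

theorem reTraceMulCLM_apply (ρ X : Matrix n n ℂ) : reTraceMulCLM ρ X = ((ρ * X).trace).re := rfl

theorem PosSemidef.norm_reTraceMulCLM_le {ρ : Matrix n n ℂ} (hρ : ρ.PosSemidef) :
    ‖reTraceMulCLM ρ‖ ≤ ‖ρ.trace‖ :=
  ContinuousLinearMap.opNorm_le_bound _ (norm_nonneg _) fun X =>
    (Complex.abs_re_le_norm _).trans (hρ.norm_trace_mul_le X)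

end Matrix

theorem expectation_derivative_bound_general (N m : ℕ)
    (ρ O : Matrix (Fin N) (Fin N) ℂ) (V H : Fin m → Matrix (Fin N) (Fin N) ℂ)
    (hρ : ρ.PosSemidef) (hρtr : ρ.trace = 1)
    (hH : ∀ l, (H l).IsHermitian) (hV : ∀ l, V l ∈ Matrix.unitaryGroup (Fin N) ℂ)
    (U : (Fin m → ℝ) → Matrix (Fin N) (Fin N) ℂ)
    (hU : ∀ α, U α = ((List.finRange m).map
      (fun l => V l * NormedSpace.exp ((-(Complex.I * ((α l : ℝ) : ℂ))) • H l))).prod)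
    (f : (Fin m → ℝ) → ℝ)
    (hf : ∀ α, f α = ((ρ * (U α)ᴴ * O * U α).trace).re)
    (k : ℕ) (kvec : Fin m → ℕ) (hk : ∑ l, kvec l = k)
    (idx : Fin k → Fin m)
    (hidx : ∀ l, (Finset.univ.filter (fun j => idx j = l)).card = kvec l)
    (α : Fin m → ℝ) :
    |iteratedFDeriv ℝ k f α (fun j => Pi.single (idx j) (1 : ℝ))|
        ≤ specNorm O * ∏ l, (2 * specNorm (H l)) ^ kvec l ∧
      |iteratedFDeriv ℝ k f α (fun j => Pi.single (idx j) (1 : ℝ))|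
        ≤ specNorm O * (2 * ⨆ l, specNorm (H l)) ^ k := by
  set B : Fin m → Matrix (Fin N) (Fin N) ℂ := fun l => (-Complex.I) • H l
  have hB (l : Fin m) : B l ∈ skewAdjoint _ :=
    (hH l).isSelfAdjoint.smul_mem_skewAdjoint (skewAdjoint.mem_iff.mpr (by simp))
  have hf_eq : f = circuitExpectation (Matrix.reTraceMulCLM ρ) O V B 0 0 := by
    funext β
    rw [hf, hU, ← circuit_zero_neg_I_smul, circuitExpectation, Matrix.reTraceMulCLM_apply,
      ← mul_assoc, ← mul_assoc]
    rfl
  have hφ : ‖Matrix.reTraceMulCLM ρ‖ ≤ 1 := by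
    simpa [hρtr] using hρ.norm_reTraceMulCLM_le
  have hprod : ∏ j, 2 * ‖B (idx j)‖ = ∏ l, (2 * specNorm (H l)) ^ kvec l := by
    rw [Finset.prod_comp_eq_prod_pow_card (fun l => 2 * ‖B l‖) idx]
    simp only [hidx, B, norm_smul, norm_neg, Complex.norm_I, one_mul]
    rfl
  have hbound : |iteratedFDeriv ℝ k f α (fun j => Pi.single (idx j) (1 : ℝ))|
      ≤ specNorm O * ∏ l, (2 * specNorm (H l)) ^ kvec l := by
    rw [hf_eq, ← hprod]
    refine (abs_iteratedFDeriv_circuitExpectation_le _ O V B hV hB k idx α).trans ?_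
    exact mul_le_mul_of_nonneg_right (mul_le_of_le_one_left (norm_nonneg O) hφ)
      (Finset.prod_nonneg fun j _ => by positivity)
  refine ⟨hbound, hbound.trans (mul_le_mul_of_nonneg_left ?_ (norm_nonneg _))⟩
  rw [Real.mul_iSup_of_nonneg zero_le_two, ← hk]
  exact prod_pow_le_iSup_pow_sum (fun l => mul_nonneg zero_le_two (norm_nonneg _)) kvec

/-- Bounded derivatives for the expectation value of a parametrized
unitary circuit `U(α) = ∏_l V_l exp(−i α_l H_l)` with Hermitian generators `H_l`:
every mixed partial derivative of `f(α) = Tr(ρ U(α)† O U(α))` of multi-order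
`(k_1, …, k_m)` (encoded as the `k`-th Fréchet derivative evaluated on a tuple of
coordinate directions containing `k_l` copies of direction `l`) is bounded by
`‖O‖ ∏_l (2‖H_l‖)^{k_l}`, and consequently by `‖O‖ (2 max_l ‖H_l‖)^k`. -/
theorem expectation_derivative_bound (N m : ℕ) (hN : 1 ≤ N) (hm : 1 ≤ m)
    (ρ O : Matrix (Fin N) (Fin N) ℂ) (V H : Fin m → Matrix (Fin N) (Fin N) ℂ)
    (hρ : ρ.PosSemidef) (hρtr : ρ.trace = 1) (hO : O.IsHermitian)
    (hH : ∀ l, (H l).IsHermitian) (hV : ∀ l, V l ∈ Matrix.unitaryGroup (Fin N) ℂ)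
    (U : (Fin m → ℝ) → Matrix (Fin N) (Fin N) ℂ)
    (hU : ∀ α, U α = ((List.finRange m).map
      (fun l => V l * NormedSpace.exp ((-(Complex.I * ((α l : ℝ) : ℂ))) • H l))).prod)
    (f : (Fin m → ℝ) → ℝ)
    (hf : ∀ α, f α = ((ρ * (U α)ᴴ * O * U α).trace).re)
    (k : ℕ) (kvec : Fin m → ℕ) (hk : ∑ l, kvec l = k)
    (idx : Fin k → Fin m)
    (hidx : ∀ l, (Finset.univ.filter (fun j => idx j = l)).card = kvec l)
    (α : Fin m → ℝ) :
    |iteratedFDeriv ℝ k f α (fun j => Pi.single (idx j) (1 : ℝ))|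
        ≤ specNorm O * ∏ l, (2 * specNorm (H l)) ^ kvec l ∧
      |iteratedFDeriv ℝ k f α (fun j => Pi.single (idx j) (1 : ℝ))|
        ≤ specNorm O * (2 * ⨆ l, specNorm (H l)) ^ k :=
  expectation_derivative_bound_general N m ρ O V H hρ hρtr hH hV U hU f hf k kvec hk idx hidx α
end

section
/- For all natural numbers m and k with 1 ≤ k, and every real number x with 0 ≤ x ≤ 1 and k ≤ m·x, the partial binomial sum satisfies Σ_{j=0}^{k} C(m, j) x^j ≤ (e m x / k)^k. -/
/-!
For every `t ∈ (0, 1]` and `z ≥ 0`, the partial binomial sum `∑_{j ≤ k} C(m, j) z^j` is at most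
`t⁻ᵏ (1 + t z)^m ≤ t⁻ᵏ e^{m t z}`, since `t^k ≤ t^j` for `j ≤ k` and the partial sum is part of the
binomial expansion of `(1 + t z)^m`. The choice `t = k / (m x)`, admissible because `k ≤ m x`,
makes the exponential equal to `e^k` and gives `(e m x / k)^k`.
-/

open Finset

lemma sum_range_choose_mul_pow_le_one_add_pow_s7 (m k : ℕ) {z : ℝ} (hz : 0 ≤ z) :
    ∑ j ∈ range (k + 1), (m.choose j : ℝ) * z ^ j ≤ (1 + z) ^ m := by
  have hfull : ∑ j ∈ range (max k m + 1), (m.choose j : ℝ) * z ^ j = (1 + z) ^ m := by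
    rw [add_comm 1 z, add_pow,
      ← sum_subset (range_subset_range.mpr (by omega : m + 1 ≤ max k m + 1))]
    · exact sum_congr rfl fun j _ => by ring
    · intro j _ hj
      rw [Nat.choose_eq_zero_of_lt (by simpa using hj), Nat.cast_zero, zero_mul]
  rw [← hfull]
  exact sum_le_sum_of_subset_of_nonneg (range_subset_range.mpr (by omega))
    fun j _ _ => by positivity

lemma sum_range_choose_mul_pow_le_div_pow (m k : ℕ) {y t : ℝ} (hy : 0 ≤ y) (ht0 : 0 < t)
    (ht1 : t ≤ 1) :
    ∑ j ∈ range (k + 1), (m.choose j : ℝ) * y ^ j ≤ (1 + t * y) ^ m / t ^ k := by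
  rw [le_div_iff₀ (pow_pos ht0 k), sum_mul]
  calc ∑ j ∈ range (k + 1), (m.choose j : ℝ) * y ^ j * t ^ k
      ≤ ∑ j ∈ range (k + 1), (m.choose j : ℝ) * (t * y) ^ j := by
        refine sum_le_sum fun j hj => ?_
        rw [mul_pow, ← mul_assoc, mul_right_comm _ (t ^ j)]
        exact mul_le_mul_of_nonneg_left
          (pow_le_pow_of_le_one ht0.le ht1 (Nat.lt_succ_iff.mp (mem_range.mp hj))) (by positivity)
    _ ≤ (1 + t * y) ^ m := sum_range_choose_mul_pow_le_one_add_pow_s7 m k (by positivity)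

lemma one_add_pow_le_exp_mul (m : ℕ) {a : ℝ} (ha : -1 ≤ a) : (1 + a) ^ m ≤ Real.exp (m * a) := by
  rw [Real.exp_nat_mul]
  exact pow_le_pow_left₀ (by linarith) (by linarith [Real.add_one_le_exp a]) m

theorem binomial_sum_first_powers_le_general (m k : ℕ) (x : ℝ) (hk : 1 ≤ k)
    (hkmx : (k : ℝ) ≤ (m : ℝ) * x) :
    ∑ j ∈ Finset.range (k + 1), (m.choose j : ℝ) * x ^ j
      ≤ (Real.exp 1 * (m : ℝ) * x / (k : ℝ)) ^ k := by
  have hk0 : (0 : ℝ) < k := by exact_mod_cast hk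
  have hmx : 0 < (m : ℝ) * x := hk0.trans_le hkmx
  have hx : 0 < x := pos_of_mul_pos_right hmx m.cast_nonneg
  have hm : (m : ℝ) ≠ 0 := left_ne_zero_of_mul hmx.ne'
  set t := (k : ℝ) / (m * x) with ht
  have ht0 : 0 < t := div_pos hk0 hmx
  have ht1 : t ≤ 1 := (div_le_one hmx).mpr hkmx
  have hexp : (m : ℝ) * (t * x) = k * 1 := by rw [ht]; field_simp
  calc ∑ j ∈ range (k + 1), (m.choose j : ℝ) * x ^ j
      ≤ (1 + t * x) ^ m / t ^ k := sum_range_choose_mul_pow_le_div_pow m k hx.le ht0 ht1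
    _ ≤ Real.exp (m * (t * x)) / t ^ k := by
        gcongr
        exact one_add_pow_le_exp_mul m (by nlinarith)
    _ = (Real.exp 1 * (m : ℝ) * x / (k : ℝ)) ^ k := by
        rw [hexp, Real.exp_nat_mul, ← div_pow]
        rw [ht]
        field_simp

/-- For all naturals `m, k` with `1 ≤ k`, and every real `x` with
`0 ≤ x ≤ 1` and `k ≤ m·x`, one has `Σ_{j=0}^{k} C(m, j) x^j ≤ (e m x / k)^k`. -/
theorem binomial_sum_first_powers_le (m k : ℕ) (x : ℝ) (hk : 1 ≤ k)
    (hx0 : 0 ≤ x) (hx1 : x ≤ 1) (hkmx : (k : ℝ) ≤ (m : ℝ) * x) :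
    ∑ j ∈ Finset.range (k + 1), (m.choose j : ℝ) * x ^ j
      ≤ (Real.exp 1 * (m : ℝ) * x / (k : ℝ)) ^ k :=
  binomial_sum_first_powers_le_general m k x hk hkmx
end

section
/- For all natural numbers m and k with 1 ≤ k ≤ m, and every real number x with 0 ≤ x and m·x ≤ k, the tail binomial sum satisfies Σ_{j=k}^{m} C(m, j) x^j ≤ (e m x / k)^k. -/
/-!
For every `t ≥ 1`, multiplying the `j`-th term by `tʲ⁻ᵏ ≥ 1` and completing the sum bounds
the tail by `(1 + t x)ᵐ / tᵏ ≤ exp (t m x) / tᵏ`. The choice `t = k / (m x)`, which is `≥ 1`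
exactly when `m x ≤ k`, turns this into `(e m x / k)ᵏ`.
-/

open Finset Real

lemma sum_Icc_choose_mul_pow_le_one_add_pow {y : ℝ} (hy : 0 ≤ y) (k m : ℕ) :
    ∑ j ∈ Icc k m, (m.choose j : ℝ) * y ^ j ≤ (1 + y) ^ m := by
  calc ∑ j ∈ Icc k m, (m.choose j : ℝ) * y ^ j
      ≤ ∑ j ∈ range (m + 1), (m.choose j : ℝ) * y ^ j :=
        sum_le_sum_of_subset_of_nonneg (fun j hj ↦ mem_range_succ_iff.2 (mem_Icc.1 hj).2)
          fun j _ _ ↦ by positivity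
    _ = (1 + y) ^ m := by
        rw [add_comm 1 y, add_pow]
        exact sum_congr rfl fun j _ ↦ by rw [one_pow]; ring

lemma sum_Icc_choose_mul_pow_mul_pow_le {x t : ℝ} (hx : 0 ≤ x) (ht : 1 ≤ t) (k m : ℕ) :
    (∑ j ∈ Icc k m, (m.choose j : ℝ) * x ^ j) * t ^ k
      ≤ ∑ j ∈ Icc k m, (m.choose j : ℝ) * (t * x) ^ j := by
  rw [sum_mul]
  refine sum_le_sum fun j hj ↦ ?_
  rw [mul_pow, mul_assoc, mul_comm (t ^ j)]
  gcongr
  exact (mem_Icc.1 hj).1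

lemma sum_Icc_choose_mul_pow_le_exp_div_pow {x t : ℝ} (hx : 0 ≤ x) (ht : 1 ≤ t) (k m : ℕ) :
    ∑ j ∈ Icc k m, (m.choose j : ℝ) * x ^ j ≤ exp (t * (m * x)) / t ^ k := by
  have htx : 0 ≤ t * x := by positivity
  rw [le_div_iff₀ (by positivity)]
  calc (∑ j ∈ Icc k m, (m.choose j : ℝ) * x ^ j) * t ^ k
      ≤ (1 + t * x) ^ m :=
        (sum_Icc_choose_mul_pow_mul_pow_le hx ht k m).trans
          (sum_Icc_choose_mul_pow_le_one_add_pow htx k m)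
    _ ≤ exp (t * x) ^ m := by
        gcongr
        linarith [add_one_le_exp (t * x)]
    _ = exp (t * (m * x)) := by rw [← exp_nat_mul]; ring_nf

lemma sum_Icc_choose_mul_pow_eq_zero {k m : ℕ} {x : ℝ} (hk : 1 ≤ k) (hmx : (m : ℝ) * x = 0) :
    ∑ j ∈ Icc k m, (m.choose j : ℝ) * x ^ j = 0 := by
  refine sum_eq_zero fun j hj ↦ ?_
  have hj : 0 < j := hk.trans (mem_Icc.1 hj).1
  rcases mul_eq_zero.1 hmx with hm | hx
  · simp [Nat.cast_eq_zero.1 hm, Nat.choose_eq_zero_of_lt hj]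
  · simp [hx, hj.ne']

theorem binomial_sum_last_powers_le_general (m k : ℕ) (x : ℝ) (hk : 1 ≤ k)
    (hx0 : 0 ≤ x) (hmx : (m : ℝ) * x ≤ (k : ℝ)) :
    ∑ j ∈ Finset.Icc k m, (m.choose j : ℝ) * x ^ j
      ≤ (Real.exp 1 * (m : ℝ) * x / (k : ℝ)) ^ k := by
  rcases (mul_nonneg m.cast_nonneg hx0).eq_or_lt with hmx0 | hmx0
  · rw [sum_Icc_choose_mul_pow_eq_zero hk hmx0.symm, mul_assoc, ← hmx0]
    simp
  · calc ∑ j ∈ Icc k m, (m.choose j : ℝ) * x ^ j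
        ≤ exp (k / (m * x) * (m * x)) / (k / (m * x)) ^ k :=
          sum_Icc_choose_mul_pow_le_exp_div_pow hx0 ((one_le_div hmx0).2 hmx) k m
      _ = (exp 1 * m * x / k) ^ k := by
          rw [div_mul_cancel₀ _ hmx0.ne', ← exp_one_pow, ← div_pow]
          field_simp

/-- For all naturals `m, k` with `1 ≤ k ≤ m`, and every real `x` with
`0 ≤ x` and `m·x ≤ k`, the tail binomial sum satisfies
`Σ_{j=k}^{m} C(m, j) x^j ≤ (e m x / k)^k`. -/
theorem binomial_sum_last_powers_le (m k : ℕ) (x : ℝ) (hk : 1 ≤ k) (hkm : k ≤ m)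
    (hx0 : 0 ≤ x) (hmx : (m : ℝ) * x ≤ (k : ℝ)) :
    ∑ j ∈ Finset.Icc k m, (m.choose j : ℝ) * x ^ j
      ≤ (Real.exp 1 * (m : ℝ) * x / (k : ℝ)) ^ k :=
  binomial_sum_last_powers_le_general m k x hk hx0 hmx
end

section
/- Let m, κ ∈ ℕ with 1 ≤ κ ≤ m and let σ ≥ 0 with σ² ≤ κ/m. Let μ_1, …, μ_m be Borel probability measures on ℝ, each symmetric under t ↦ −t and satisfying ∫ sin²(t) dμ_i(t) ≤ σ², and let μ = μ_1 ⊗ ⋯ ⊗ μ_m be the product measure on ℝ^m. Let d : {1, −1}^m → [−1, 1] be any family of coefficients. Then ∫ ( Σ_{ω ∈ {1,−1}^m : #sin(ω) ≥ κ} Φ_ω(α) d_ω )² dμ(α) ≤ (e m σ² / κ)^κ. -/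
open MeasureTheory

/-- The path coefficient `Φ_ω(α) = ∏_i φ_{ω_i}(α_i)` where a `true` entry of `ω` stands for
`ω_i = −1` (a sine factor) and a `false` entry for `ω_i = 1` (a cosine factor). -/
noncomputable def pathCoeff (m : ℕ) (ω : Fin m → Bool) (α : Fin m → ℝ) : ℝ :=
  ∏ i, if ω i then Real.sin (α i) else Real.cos (α i)

/-- `#sin(ω)`: the number of sine factors (entries `ω_i = −1`, encoded as `true`). -/
def numSin (m : ℕ) (ω : Fin m → Bool) : ℕ :=
  (Finset.univ.filter (fun i => ω i = true)).card

/-!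
Since each `μ_i` is symmetric, `∫ sin · cos dμ_i = 0`, so the path coefficients `Φ_ω` are
orthogonal in `L²(μ)` and the mean square error is `∑_{#sin(ω) ≥ κ} d_ω² ‖Φ_ω‖²`. Each norm
factorises, with `∫ sin² dμ_i ≤ σ²` and `∫ cos² dμ_i ≤ 1`, so the error is at most
`∑_{k ≥ κ} C(m, k) σ^{2k}`. With `r = mσ²/κ ≤ 1` this binomial tail is bounded by
`∑_k r^κ κ^k / k! ≤ r^κ e^κ`.
-/

open Finset

section Orthogonality

variable {X ι : Type*} [MeasurableSpace X] {μ : Measure X}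

theorem integral_sum_mul_sq_of_orthogonal (s : Finset ι) (f : ι → X → ℝ) (c : ι → ℝ)
    (hf : ∀ i ∈ s, MemLp (f i) 2 μ)
    (horth : ∀ i ∈ s, ∀ j ∈ s, i ≠ j → ∫ x, f i x * f j x ∂μ = 0) :
    ∫ x, (∑ i ∈ s, f i x * c i) ^ 2 ∂μ = ∑ i ∈ s, c i ^ 2 * ∫ x, f i x ^ 2 ∂μ := by
  have hint : ∀ i ∈ s, ∀ j ∈ s, Integrable (fun x => c i * c j * (f i x * f j x)) μ :=
    fun i hi j hj => ((hf i hi).integrable_mul (hf j hj)).const_mul _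
  have hexpand : ∀ x, (∑ i ∈ s, f i x * c i) ^ 2
      = ∑ i ∈ s, ∑ j ∈ s, c i * c j * (f i x * f j x) := fun x => by
    rw [sq, sum_mul_sum]
    exact sum_congr rfl fun i _ => sum_congr rfl fun j _ => by ring
  simp_rw [hexpand]
  rw [integral_finsetSum _ fun i hi => integrable_finsetSum _ fun j hj => hint i hi j hj]
  refine sum_congr rfl fun i hi => ?_
  rw [integral_finsetSum _ fun j hj => hint i hi j hj,
    sum_eq_single_of_mem i hi fun j hj hji => by rw [integral_const_mul, horth i hi j hj hji.symm,
      mul_zero], integral_const_mul]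
  simp only [← pow_two]

end Orthogonality

theorem integral_eq_zero_of_odd {G : Type*} [AddGroup G] [MeasurableSpace G] [MeasurableNeg G]
    (ν : Measure G) [ν.IsNegInvariant] {f : G → ℝ} (hf : ∀ x, f (-x) = -f x) :
    ∫ x, f x ∂ν = 0 := by
  have h := integral_neg_eq_self f ν
  simp only [hf, integral_neg] at h
  linarith

noncomputable def trigFactor (b : Bool) (t : ℝ) : ℝ := if b then Real.sin t else Real.cos t

theorem measurable_trigFactor (b : Bool) : Measurable (trigFactor b) := by
  cases b
  · exact Real.measurable_cos
  · exact Real.measurable_sin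

theorem abs_trigFactor_le_one (b : Bool) (t : ℝ) : |trigFactor b t| ≤ 1 := by
  cases b
  · exact Real.abs_cos_le_one t
  · exact Real.abs_sin_le_one t

theorem integral_trigFactor_mul_of_ne (ν : Measure ℝ) [ν.IsNegInvariant] {b b' : Bool}
    (h : b ≠ b') : ∫ t, trigFactor b t * trigFactor b' t ∂ν = 0 :=
  integral_eq_zero_of_odd ν fun t => by
    cases b <;> cases b' <;> simp_all [trigFactor]

theorem integral_trigFactor_sq_le (ν : Measure ℝ) [IsProbabilityMeasure ν] {s : ℝ}
    (hs : ∫ t, Real.sin t ^ 2 ∂ν ≤ s) (b : Bool) :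
    ∫ t, trigFactor b t ^ 2 ∂ν ≤ if b then s else 1 := by
  cases b
  · have hbound : ∀ t, ‖trigFactor false t ^ 2‖ ≤ 1 := fun t => by
      rw [norm_pow, Real.norm_eq_abs, sq_le_one_iff_abs_le_one, abs_abs]
      exact abs_trigFactor_le_one false t
    simpa using (le_abs_self _).trans
      (norm_integral_le_of_norm_le_const (μ := ν) (.of_forall hbound))
  · exact hs

section PathCoeff

variable {m : ℕ}

theorem pathCoeff_eq_prod_trigFactor (ω : Fin m → Bool) (α : Fin m → ℝ) :
    pathCoeff m ω α = ∏ i, trigFactor (ω i) (α i) := rfl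

theorem abs_pathCoeff_le_one (ω : Fin m → Bool) (α : Fin m → ℝ) : |pathCoeff m ω α| ≤ 1 := by
  rw [pathCoeff_eq_prod_trigFactor, abs_prod]
  exact prod_le_one (fun i _ => abs_nonneg _) fun i _ => abs_trigFactor_le_one _ _

theorem measurable_pathCoeff (ω : Fin m → Bool) : Measurable (pathCoeff m ω) :=
  measurable_prod _ fun i _ => (measurable_trigFactor (ω i)).comp (measurable_pi_apply i)

theorem memLp_pathCoeff (μ : Measure (Fin m → ℝ)) [IsFiniteMeasure μ] (p : ENNReal)
    (ω : Fin m → Bool) : MemLp (pathCoeff m ω) p μ :=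
  .of_bound (measurable_pathCoeff ω).aestronglyMeasurable 1
    (.of_forall fun α => abs_pathCoeff_le_one ω α)

variable (μ : Fin m → Measure ℝ) [∀ i, SigmaFinite (μ i)]

theorem integral_pathCoeff_mul (ω ω' : Fin m → Bool) :
    ∫ α, pathCoeff m ω α * pathCoeff m ω' α ∂Measure.pi μ
      = ∏ i, ∫ t, trigFactor (ω i) t * trigFactor (ω' i) t ∂μ i := by
  simp_rw [pathCoeff_eq_prod_trigFactor, ← prod_mul_distrib]
  exact integral_fintype_prod_eq_prod (fun i t => trigFactor (ω i) t * trigFactor (ω' i) t)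

theorem integral_pathCoeff_mul_of_ne [∀ i, (μ i).IsNegInvariant] {ω ω' : Fin m → Bool}
    (h : ω ≠ ω') : ∫ α, pathCoeff m ω α * pathCoeff m ω' α ∂Measure.pi μ = 0 := by
  obtain ⟨i, hi⟩ := Function.ne_iff.mp h
  rw [integral_pathCoeff_mul]
  exact prod_eq_zero (mem_univ i) (integral_trigFactor_mul_of_ne (μ i) hi)

theorem integral_pathCoeff_sq_le [∀ i, IsProbabilityMeasure (μ i)] {s : ℝ}
    (hs : ∀ i, ∫ t, Real.sin t ^ 2 ∂μ i ≤ s) (ω : Fin m → Bool) :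
    ∫ α, pathCoeff m ω α ^ 2 ∂Measure.pi μ ≤ s ^ numSin m ω := by
  simp_rw [sq, integral_pathCoeff_mul, ← sq]
  calc ∏ i, ∫ t, trigFactor (ω i) t ^ 2 ∂μ i
      ≤ ∏ i, if ω i then s else 1 :=
        prod_le_prod (fun i _ => integral_nonneg fun t => sq_nonneg _)
          fun i _ => integral_trigFactor_sq_le (μ i) (hs i) (ω i)
    _ = s ^ numSin m ω := by rw [prod_ite, prod_const, prod_const_one, mul_one, numSin]

end PathCoeff

theorem sum_pow_numSin_filter_eq {R : Type*} [CommSemiring R] (m κ : ℕ) (x : R) :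
    ∑ ω ∈ univ.filter (fun ω => κ ≤ numSin m ω), x ^ numSin m ω
      = ∑ k ∈ (range (m + 1)).filter (κ ≤ ·), (m.choose k : R) * x ^ k := by
  have hsubsets : ∑ ω ∈ univ.filter (fun ω => κ ≤ numSin m ω), x ^ numSin m ω
      = ∑ A : Finset (Fin m), if κ ≤ #A then x ^ #A else 0 := by
    rw [sum_filter]
    refine sum_nbij' (fun ω => univ.filter (ω · = true)) (fun A i => decide (i ∈ A))
      (by simp) (by simp) (fun ω _ => by ext i; simp) (fun A _ => by ext i; simp)
      (fun ω _ => rfl)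
  rw [hsubsets, ← powerset_univ, sum_powerset_apply_card (fun k => if κ ≤ k then x ^ k else 0),
    card_univ, Fintype.card_fin,
    sum_filter]
  simp only [nsmul_eq_mul, mul_ite, mul_zero]

theorem sum_choose_mul_pow_le {m κ : ℕ} (hκ : 0 < κ) {x : ℝ} (hx : 0 ≤ x)
    (hmx : m * x ≤ κ) :
    ∑ k ∈ (range (m + 1)).filter (κ ≤ ·), (m.choose k : ℝ) * x ^ k
      ≤ (Real.exp 1 * m * x / κ) ^ κ := by
  have hκ' : (0 : ℝ) < κ := by exact_mod_cast hκ
  set r : ℝ := m * x / κ with hr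
  have hr0 : 0 ≤ r := by positivity
  have hr1 : r ≤ 1 := (div_le_one hκ').mpr hmx
  have hmx_eq : m * x = r * κ := by rw [hr, div_mul_cancel₀ _ hκ'.ne']
  have hterm : ∀ k, κ ≤ k → (m.choose k : ℝ) * x ^ k ≤ r ^ κ * (κ ^ k / k.factorial) :=
    fun k hk => calc
      (m.choose k : ℝ) * x ^ k ≤ (m ^ k / k.factorial) * x ^ k := by
        gcongr; exact Nat.choose_le_pow_div k m
      _ = r ^ k * (κ ^ k / k.factorial) := by rw [div_mul_eq_mul_div, ← mul_pow, hmx_eq, mul_pow]; ring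
      _ ≤ r ^ κ * (κ ^ k / k.factorial) := 
        mul_le_mul_of_nonneg_right (pow_le_pow_of_le_one hr0 hr1 hk) (by positivity)
  calc ∑ k ∈ (range (m + 1)).filter (κ ≤ ·), (m.choose k : ℝ) * x ^ k
      ≤ ∑ k ∈ range (m + 1), r ^ κ * (κ ^ k / k.factorial) := by
        rw [sum_filter]
        exact sum_le_sum fun k _ => by split_ifs with hk; exacts [hterm k hk, by positivity]
    _ ≤ r ^ κ * Real.exp κ := by
        rw [← mul_sum]; gcongr; exact Real.sum_le_exp_of_nonneg hκ'.le _
    _ = (Real.exp 1 * m * x / κ) ^ κ := by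
        rw [← Real.exp_one_pow, hr, ← mul_pow]; ring

theorem mse_truncation_uncorrelated_general (m κ : ℕ) (hκ1 : 1 ≤ κ)
    (σ : ℝ) (hσ2 : σ ^ 2 ≤ (κ : ℝ) / (m : ℝ))
    (μ : Fin m → Measure ℝ) [∀ i, IsProbabilityMeasure (μ i)]
    (hsymm : ∀ i, (μ i).map (fun t => -t) = μ i)
    (hvar : ∀ i, ∫ t, Real.sin t ^ 2 ∂(μ i) ≤ σ ^ 2)
    (d : (Fin m → Bool) → ℝ) (hd : ∀ ω, |d ω| ≤ 1) :
    ∫ α, (∑ ω ∈ Finset.univ.filter (fun ω => κ ≤ numSin m ω),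
          pathCoeff m ω α * d ω) ^ 2 ∂(Measure.pi μ)
      ≤ (Real.exp 1 * (m : ℝ) * σ ^ 2 / (κ : ℝ)) ^ κ := by
  have : ∀ i, (μ i).IsNegInvariant := fun i => ⟨hsymm i⟩
  have hmσ : m * σ ^ 2 ≤ κ := by
    rw [mul_comm]; exact mul_le_of_le_div₀ κ.cast_nonneg m.cast_nonneg hσ2
  rw [integral_sum_mul_sq_of_orthogonal _ _ _ (fun ω _ => memLp_pathCoeff _ 2 ω)
    fun ω _ ω' _ h => integral_pathCoeff_mul_of_ne μ h]
  calc ∑ ω ∈ univ.filter (fun ω => κ ≤ numSin m ω),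
        d ω ^ 2 * ∫ α, pathCoeff m ω α ^ 2 ∂Measure.pi μ
      ≤ ∑ ω ∈ univ.filter (fun ω => κ ≤ numSin m ω), (σ ^ 2) ^ numSin m ω :=
        sum_le_sum fun ω _ => (mul_le_of_le_one_left (integral_nonneg fun α => sq_nonneg _)
          ((sq_le_one_iff_abs_le_one _).mpr (hd ω))).trans (integral_pathCoeff_sq_le μ hvar ω)
    _ ≤ _ := by
        rw [sum_pow_numSin_filter_eq]
        exact sum_choose_mul_pow_le hκ1 (sq_nonneg σ) hmσ

/-- Mean square truncation error for uncorrelated symmetric parameters: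
if each `μ_i` is a symmetric probability measure on `ℝ` with `∫ sin² dμ_i ≤ σ²` and
`σ² ≤ κ/m`, then for any coefficients `d_ω ∈ [−1,1]`,
`∫ (Σ_{#sin(ω) ≥ κ} Φ_ω(α) d_ω)² dμ(α) ≤ (e m σ²/κ)^κ`. -/
theorem mse_truncation_uncorrelated (m κ : ℕ) (hκ1 : 1 ≤ κ) (hκm : κ ≤ m)
    (σ : ℝ) (hσ : 0 ≤ σ) (hσ2 : σ ^ 2 ≤ (κ : ℝ) / (m : ℝ))
    (μ : Fin m → Measure ℝ) [∀ i, IsProbabilityMeasure (μ i)]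
    (hsymm : ∀ i, (μ i).map (fun t => -t) = μ i)
    (hvar : ∀ i, ∫ t, Real.sin t ^ 2 ∂(μ i) ≤ σ ^ 2)
    (d : (Fin m → Bool) → ℝ) (hd : ∀ ω, |d ω| ≤ 1) :
    ∫ α, (∑ ω ∈ Finset.univ.filter (fun ω => κ ≤ numSin m ω),
          pathCoeff m ω α * d ω) ^ 2 ∂(Measure.pi μ)
      ≤ (Real.exp 1 * (m : ℝ) * σ ^ 2 / (κ : ℝ)) ^ κ :=
  mse_truncation_uncorrelated_general m κ hκ1 σ hσ2 μ hsymm hvar d hd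
end

section
/- Let m, κ ∈ ℕ with 1 ≤ κ ≤ m and let r ≥ 0 with r ≤ κ/m. Let d : {1, −1}^m → [−1, 1] be any family of coefficients. Then for every α ∈ [−r, r]^m, Σ_{ω ∈ {1,−1}^m : #sin(ω) ≥ κ} |Φ_ω(α)| ≤ (e m r / κ)^κ, and in particular | Σ_{ω ∈ {1,−1}^m : #sin(ω) ≥ κ} Φ_ω(α) d_ω | ≤ (e m r / κ)^κ. -/
/-!
Since `|sin t| ≤ |t|` and `|cos t| ≤ 1`, we have `|Φ_ω(α)| ≤ r ^ #sin(ω)`. The tail sum is then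
bounded by Rankin's trick: for `c = κ/m ≥ r`, every term with `#sin(ω) ≥ κ` satisfies
`r ^ #sin(ω) ≤ (r/c)^κ c ^ #sin(ω)`, and summing over all `ω` with `∑_ω c ^ #sin(ω) = (1 + c)^m` gives
`(r/c)^κ (1 + c)^m ≤ (r/c)^κ e^κ = (e m r/κ)^κ`.
-/

open Finset Real

lemma one_add_div_pow_le_exp {n : ℕ} {x : ℝ} (hx : 0 ≤ x) : (1 + x / n) ^ n ≤ exp x := by
  simpa [sub_eq_add_neg, neg_div] using
    one_sub_div_pow_le_exp_neg (n := n) (t := -x) (by linarith [n.cast_nonneg (α := ℝ)])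

lemma pow_le_div_pow_mul_pow {r c : ℝ} (hr : 0 ≤ r) (hrc : r ≤ c) (hc : 0 < c) {κ n : ℕ}
    (hκn : κ ≤ n) : r ^ n ≤ (r / c) ^ κ * c ^ n := by
  obtain ⟨k, rfl⟩ := Nat.exists_eq_add_of_le hκn
  calc r ^ (κ + k) = r ^ κ * r ^ k := pow_add r κ k
    _ ≤ r ^ κ * c ^ k := by gcongr
    _ = (r / c) ^ κ * c ^ (κ + k) := by rw [div_pow, pow_add]; field_simp

lemma sum_filter_le_pow_le_div_pow_mul_sum {ι : Type*} (s : Finset ι) (f : ι → ℕ) {r c : ℝ}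
    (hr : 0 ≤ r) (hrc : r ≤ c) (hc : 0 < c) (κ : ℕ) :
    ∑ i ∈ s with κ ≤ f i, r ^ f i ≤ (r / c) ^ κ * ∑ i ∈ s, c ^ f i := by
  rw [mul_sum]
  calc ∑ i ∈ s with κ ≤ f i, r ^ f i
      ≤ ∑ i ∈ s with κ ≤ f i, (r / c) ^ κ * c ^ f i :=
        sum_le_sum fun i hi => pow_le_div_pow_mul_pow hr hrc hc (mem_filter.1 hi).2
    _ ≤ ∑ i ∈ s, (r / c) ^ κ * c ^ f i :=
        sum_le_sum_of_subset_of_nonneg (filter_subset _ _) fun _ _ _ => by positivity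

lemma prod_ite_one_eq_pow_numSin {M : Type*} [CommMonoid M] (m : ℕ) (ω : Fin m → Bool) (x : M) :
    ∏ i, (if ω i then x else 1) = x ^ numSin m ω := by
  rw [prod_ite, prod_const, prod_const_one, mul_one, numSin]

lemma sum_pow_numSin (m : ℕ) (x : ℝ) : ∑ ω : Fin m → Bool, x ^ numSin m ω = (1 + x) ^ m := by
  have h := Fintype.prod_sum fun (_ : Fin m) (b : Bool) => if b then x else 1
  simp only [Fintype.sum_bool, if_true, Bool.false_eq_true, if_false, prod_const, card_univ,
    Fintype.card_fin, prod_ite_one_eq_pow_numSin] at h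
  rw [← h, add_comm]

lemma abs_pathCoeff_le_pow_numSin {m : ℕ} {r : ℝ} (ω : Fin m → Bool) {α : Fin m → ℝ}
    (hα : ∀ i, |α i| ≤ r) : |pathCoeff m ω α| ≤ r ^ numSin m ω := by
  rw [pathCoeff, abs_prod, ← prod_ite_one_eq_pow_numSin]
  refine prod_le_prod (fun _ _ => abs_nonneg _) fun i _ => ?_
  split_ifs
  · exact abs_sin_le_abs.trans (hα i)
  · exact abs_cos_le_one _

lemma abs_sum_mul_le_sum_abs {ι : Type*} (s : Finset ι) (f d : ι → ℝ) (hd : ∀ i, |d i| ≤ 1) :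
    |∑ i ∈ s, f i * d i| ≤ ∑ i ∈ s, |f i| :=
  (abs_sum_le_sum_abs _ _).trans <| sum_le_sum fun i _ => by
    rw [abs_mul]; exact mul_le_of_le_one_right (abs_nonneg _) (hd i)

/-- Worst-case truncation error: if `r ≤ κ/m`, then for every
`α ∈ [−r, r]^m`, `Σ_{#sin(ω) ≥ κ} |Φ_ω(α)| ≤ (e m r/κ)^κ`, and in particular
`|Σ_{#sin(ω) ≥ κ} Φ_ω(α) d_ω| ≤ (e m r/κ)^κ` for any coefficients `d_ω ∈ [−1,1]`. -/
theorem worst_case_truncation_error (m κ : ℕ) (hκ1 : 1 ≤ κ) (hκm : κ ≤ m)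
    (r : ℝ) (hr : 0 ≤ r) (hrκ : r ≤ (κ : ℝ) / (m : ℝ))
    (d : (Fin m → Bool) → ℝ) (hd : ∀ ω, |d ω| ≤ 1)
    (α : Fin m → ℝ) (hα : ∀ i, |α i| ≤ r) :
    (∑ ω ∈ Finset.univ.filter (fun ω => κ ≤ numSin m ω), |pathCoeff m ω α|)
        ≤ (Real.exp 1 * (m : ℝ) * r / (κ : ℝ)) ^ κ ∧
      |∑ ω ∈ Finset.univ.filter (fun ω => κ ≤ numSin m ω), pathCoeff m ω α * d ω|
        ≤ (Real.exp 1 * (m : ℝ) * r / (κ : ℝ)) ^ κ := by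
  have hκ : (0 : ℝ) < κ := by exact_mod_cast hκ1
  have hm : (0 : ℝ) < m := by exact_mod_cast hκ1.trans hκm
  have hc : 0 < (κ : ℝ) / m := div_pos hκ hm
  have tail : ∑ ω with κ ≤ numSin m ω, |pathCoeff m ω α|
      ≤ (exp 1 * m * r / κ) ^ κ :=
    calc ∑ ω with κ ≤ numSin m ω, |pathCoeff m ω α|
        ≤ ∑ ω with κ ≤ numSin m ω, r ^ numSin m ω :=
          sum_le_sum fun ω _ => abs_pathCoeff_le_pow_numSin ω hα
      _ ≤ (r / (κ / m)) ^ κ * (1 + κ / m) ^ m := by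
          rw [← sum_pow_numSin]
          exact sum_filter_le_pow_le_div_pow_mul_sum _ _ hr hrκ hc κ
      _ ≤ (r / (κ / m)) ^ κ * exp 1 ^ κ := by
          rw [← exp_nat_mul, mul_one]
          gcongr
          exact one_add_div_pow_le_exp hκ.le
      _ = (exp 1 * m * r / κ) ^ κ := by
          rw [← mul_pow]; field_simp
  exact ⟨tail, (abs_sum_mul_le_sum_abs _ _ _ hd).trans tail⟩
end

section
/- Let m, κ ∈ ℕ with 1 ≤ κ ≤ m and let r > 0 with r ≤ κ/m. Let d : {1, −1}^m → [−1, 1] be any family of coefficients. Then, with a single parameter t used in all m slots (maximally correlated angles), the average absolute error satisfies (1/(2r)) ∫_{−r}^{r} | Σ_{ω ∈ {1,−1}^m : #sin(ω) ≥ κ} cos(t)^{m − #sin(ω)} · sin(t)^{#sin(ω)} · d_ω | dt ≤ (e m r / κ)^κ / (κ + 1). -/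
open Finset Real
open scoped Nat

def boolFunEquivFinset (m : ℕ) : (Fin m → Bool) ≃ Finset (Fin m) where
  toFun ω := univ.filter (fun i => ω i = true)
  invFun s i := decide (i ∈ s)
  left_inv ω := by ext i; simp
  right_inv s := by ext i; simp

theorem sum_numSin_eq_sum_choose {M : Type*} [AddCommMonoid M] (m : ℕ) (f : ℕ → M) :
    ∑ ω : Fin m → Bool, f (numSin m ω) = ∑ k ∈ range (m + 1), m.choose k • f k := by
  rw [Fintype.sum_equiv (boolFunEquivFinset m) (fun ω => f (numSin m ω)) (fun s => f #s)
    (fun _ => rfl),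
    ← Finset.powerset_univ, sum_powerset_apply_card, card_univ, Fintype.card_fin]

theorem choose_mul_pow_le {m κ k : ℕ} (hκ : 0 < κ) (hk : κ ≤ k) {x : ℝ} (hx : 0 ≤ x)
    (hmx : m * x ≤ κ) :
    (m.choose k : ℝ) * x ^ k ≤ (m * x / κ) ^ κ * (κ ^ k / k !) := by
  have hκ' : (0 : ℝ) < κ := by exact_mod_cast hκ
  set y := m * x / κ
  have hy : 0 ≤ y := by positivity
  have hy1 : y ≤ 1 := (div_le_one hκ').2 hmx
  calc (m.choose k : ℝ) * x ^ k ≤ m ^ k / k ! * x ^ k := by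
        gcongr; exact Nat.choose_le_pow_div k m
    _ = y ^ k * (κ ^ k / k !) := by
        rw [div_pow, mul_pow]; field_simp
    _ ≤ y ^ κ * (κ ^ k / k !) :=
        mul_le_mul_of_nonneg_right (pow_le_pow_of_le_one hy hy1 hk) (by positivity)

theorem sum_tail_choose_mul_pow_le {m κ : ℕ} (hκ : 0 < κ) {x : ℝ} (hx : 0 ≤ x) (hmx : m * x ≤ κ) :
    ∑ k ∈ range (m + 1) with κ ≤ k, (m.choose k : ℝ) * x ^ k ≤ (exp 1 * m * x / κ) ^ κ := by
  calc ∑ k ∈ range (m + 1) with κ ≤ k, (m.choose k : ℝ) * x ^ k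
      ≤ ∑ k ∈ range (m + 1) with κ ≤ k, (m * x / κ) ^ κ * (κ ^ k / k !) :=
        sum_le_sum fun k hk => choose_mul_pow_le hκ (mem_filter.1 hk).2 hx hmx
    _ ≤ ∑ k ∈ range (m + 1), (m * x / κ) ^ κ * ((κ : ℝ) ^ k / k !) :=
        sum_le_sum_of_subset_of_nonneg (filter_subset _ _) fun _ _ _ => by positivity
    _ ≤ (m * x / κ) ^ κ * exp κ := by
        rw [← mul_sum]; gcongr; exact sum_le_exp_of_nonneg (Nat.cast_nonneg κ) _
    _ = (exp 1 * m * x / κ) ^ κ := by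
        rw [← exp_one_pow]; ring

theorem abs_cos_pow_mul_sin_pow_mul_le (t c : ℝ) (hc : |c| ≤ 1) (i j : ℕ) :
    |cos t ^ i * sin t ^ j * c| ≤ |t| ^ j := by
  rw [abs_mul, abs_mul, abs_pow, abs_pow]
  calc |cos t| ^ i * |sin t| ^ j * |c| ≤ 1 ^ i * |t| ^ j * 1 := by
        gcongr ?_ ^ _ * ?_ ^ _ * ?_
        exacts [abs_cos_le_one t, abs_sin_le_abs]
    _ = |t| ^ j := by ring

theorem abs_truncated_path_sum_le {m κ : ℕ} (hκ : 0 < κ) {t : ℝ} (ht : m * |t| ≤ κ)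
    (d : (Fin m → Bool) → ℝ) (hd : ∀ ω, |d ω| ≤ 1) :
    |∑ ω ∈ univ.filter (fun ω => κ ≤ numSin m ω),
        cos t ^ (m - numSin m ω) * sin t ^ (numSin m ω) * d ω|
      ≤ (exp 1 * m * |t| / κ) ^ κ :=
  calc _ ≤ ∑ ω ∈ univ.filter (fun ω => κ ≤ numSin m ω), |t| ^ numSin m ω :=
        (abs_sum_le_sum_abs _ _).trans <| sum_le_sum fun ω _ =>
          abs_cos_pow_mul_sin_pow_mul_le t (d ω) (hd ω) _ _
    _ = ∑ k ∈ range (m + 1) with κ ≤ k, (m.choose k : ℝ) * |t| ^ k := by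
        rw [sum_filter, sum_filter,
          sum_numSin_eq_sum_choose m fun k => if κ ≤ k then |t| ^ k else 0]
        refine sum_congr rfl fun k _ => ?_
        split_ifs <;> simp [nsmul_eq_mul]
    _ ≤ _ := sum_tail_choose_mul_pow_le hκ (abs_nonneg t) ht

theorem integral_abs_pow_symm (n : ℕ) {r : ℝ} (hr : 0 ≤ r) :
    ∫ t in -r..r, |t| ^ n = 2 * (r ^ (n + 1) / (n + 1)) := by
  have hint : ∀ a b : ℝ, IntervalIntegrable (fun t => |t| ^ n) MeasureTheory.volume a b :=
    fun a b => (continuous_abs.pow n).intervalIntegrable a b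
  have hpos : ∫ t in (0 : ℝ)..r, |t| ^ n = r ^ (n + 1) / (n + 1) := by
    rw [intervalIntegral.integral_congr (g := fun t => t ^ n), integral_pow]
    · simp
    · intro t ht
      rw [Set.uIcc_of_le hr] at ht
      simp [abs_of_nonneg ht.1]
  have hneg : ∫ t in -r..0, |t| ^ n = ∫ t in (0 : ℝ)..r, |t| ^ n := by
    simpa using (intervalIntegral.integral_comp_neg (a := 0) (b := r) (fun t => |t| ^ n)).symm
  rw [← intervalIntegral.integral_add_adjacent_intervals (hint _ 0) (hint 0 _), hneg, hpos]
  ring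

theorem correlated_average_truncation_error_general (m κ : ℕ) (hκ1 : 1 ≤ κ)
    (r : ℝ) (hr : 0 < r) (hrκ : r ≤ (κ : ℝ) / (m : ℝ))
    (d : (Fin m → Bool) → ℝ) (hd : ∀ ω, |d ω| ≤ 1) :
    (1 / (2 * r)) * (∫ t in (-r)..r,
        |∑ ω ∈ Finset.univ.filter (fun ω => κ ≤ numSin m ω),
          Real.cos t ^ (m - numSin m ω) * Real.sin t ^ (numSin m ω) * d ω|)
      ≤ (Real.exp 1 * (m : ℝ) * r / (κ : ℝ)) ^ κ / ((κ : ℝ) + 1) := by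
  have hm : (0 : ℝ) < m :=
    (div_pos_iff_of_pos_left (Nat.cast_pos.2 hκ1)).1 (hr.trans_le hrκ)
  set C := (exp 1 * m / κ) ^ κ
  have hbound : ∀ t ∈ Set.Icc (-r) r,
      |∑ ω ∈ univ.filter (fun ω => κ ≤ numSin m ω),
          cos t ^ (m - numSin m ω) * sin t ^ (numSin m ω) * d ω| ≤ C * |t| ^ κ := by
    intro t ht
    have htr : |t| ≤ r := abs_le.2 ht
    have hmt : m * |t| ≤ κ := (le_div_iff₀' hm).1 (htr.trans hrκ)
    calc _ ≤ (exp 1 * m * |t| / κ) ^ κ := abs_truncated_path_sum_le hκ1 hmt d hd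
      _ = C * |t| ^ κ := by rw [mul_div_right_comm, mul_pow]
  have hcont : Continuous fun t => |∑ ω ∈ univ.filter (fun ω => κ ≤ numSin m ω),
      cos t ^ (m - numSin m ω) * sin t ^ (numSin m ω) * d ω| := by fun_prop
  calc _ ≤ 1 / (2 * r) * ∫ t in -r..r, C * |t| ^ κ := by
        gcongr
        exact intervalIntegral.integral_mono_on (by linarith) (hcont.intervalIntegrable _ _)
          ((continuous_const.mul (continuous_abs.pow κ)).intervalIntegrable _ _) hbound
    _ = _ := by
        rw [intervalIntegral.integral_const_mul, integral_abs_pow_symm κ hr.le]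
        field_simp
        ring

/-- Average truncation error for maximally correlated angles: with a
single parameter `t` uniform on `[−r, r]` used in all `m` slots and `r ≤ κ/m`,
`(1/(2r)) ∫_{−r}^{r} |Σ_{#sin(ω) ≥ κ} cos(t)^{m−#sin(ω)} sin(t)^{#sin(ω)} d_ω| dt
  ≤ (e m r/κ)^κ / (κ+1)` for any coefficients `d_ω ∈ [−1,1]`. -/
theorem correlated_average_truncation_error (m κ : ℕ) (hκ1 : 1 ≤ κ) (hκm : κ ≤ m)
    (r : ℝ) (hr : 0 < r) (hrκ : r ≤ (κ : ℝ) / (m : ℝ))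
    (d : (Fin m → Bool) → ℝ) (hd : ∀ ω, |d ω| ≤ 1) :
    (1 / (2 * r)) * (∫ t in (-r)..r,
        |∑ ω ∈ Finset.univ.filter (fun ω => κ ≤ numSin m ω),
          Real.cos t ^ (m - numSin m ω) * Real.sin t ^ (numSin m ω) * d ω|)
      ≤ (Real.exp 1 * (m : ℝ) * r / (κ : ℝ)) ^ κ / ((κ : ℝ) + 1) :=
  correlated_average_truncation_error_general m κ hκ1 r hr hrκ d hd
end

section
/- Let m ≥ 1 and let u_1, …, u_m be independent random variables, each uniformly distributed on [−1, 1]. Then for every k ∈ ℕ, E[ ( Σ_{i=1}^{m} u_i )^{2k} ] ≤ (m/3)^k · (2k − 1)!!, i.e. the even moments of the standardized sum X_m = (Σ_{i=1}^m u_i)/√(m/3) are bounded by the corresponding moments of a standard Gaussian: E[X_m^{2k}] ≤ (2k − 1)!!. -/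
open MeasureTheory ProbabilityTheory Finset

/-!
Moment domination by a centred Gaussian is additive over independent sums: if `X` and `Y` are
independent, the odd moments of `X` vanish and `E[X^{2k}] ≤ a^k (2k-1)‼`, `E[Y^{2k}] ≤ b^k (2k-1)‼`
for all `k`, then the binomial expansion of `E[(X+Y)^{2K}]` keeps only the even terms, and the
identity `C(2K,2i) (2i-1)‼ (2K-2i-1)‼ = C(K,i) (2K-1)‼` (the moments of a sum of two independent
Gaussians) turns the termwise bound into `(a+b)^K (2K-1)‼`. A uniform variable on `[-1,1]` has
`E[u^{2k}] = 1/(2k+1) ≤ 3^{-k} (2k-1)‼` because every factor `2j+1` with `j ≥ 1` is at least `3`.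
-/

/-- `(2k - 1)‼` as a real number, equal to `1` at `k = 0` (no truncated `2 * 0 - 1`). -/
noncomputable def oddDoubleFactorial (k : ℕ) : ℝ := ∏ j ∈ range k, (2 * (j : ℝ) + 1)

lemma oddDoubleFactorial_succ (k : ℕ) :
    oddDoubleFactorial (k + 1) = oddDoubleFactorial k * (2 * k + 1) :=
  prod_range_succ _ _

lemma oddDoubleFactorial_mul_two_pow_mul_factorial (k : ℕ) :
    oddDoubleFactorial k * (2 ^ k * k.factorial) = (2 * k).factorial := by
  induction k with
  | zero => simp [oddDoubleFactorial]
  | succ k ih =>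
    rw [oddDoubleFactorial_succ, show 2 * (k + 1) = 2 * k + 1 + 1 by ring,
      Nat.factorial_succ, Nat.factorial_succ, Nat.factorial_succ]
    push_cast
    rw [← ih]
    ring

lemma choose_two_mul_mul_oddDoubleFactorial {i K : ℕ} (h : i ≤ K) :
    ((2 * K).choose (2 * i) : ℝ) * oddDoubleFactorial i * oddDoubleFactorial (K - i)
      = K.choose i * oddDoubleFactorial K := by
  obtain ⟨l, rfl⟩ := Nat.exists_eq_add_of_le h
  rw [Nat.add_sub_cancel_left]
  have hchoose₂ : ((2 * (i + l)).choose (2 * i) : ℝ) * (2 * i).factorial * (2 * l).factorial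
      = (2 * (i + l)).factorial := by
    rw [mul_add, Nat.choose_symm_add]
    exact_mod_cast Nat.add_choose_mul_factorial_mul_factorial (2 * i) (2 * l)
  have hchoose : ((i + l).choose i : ℝ) * i.factorial * l.factorial = (i + l).factorial := by
    rw [Nat.choose_symm_add]
    exact_mod_cast Nat.add_choose_mul_factorial_mul_factorial i l
  refine mul_right_cancel₀ (b := (2 ^ i * i.factorial * (2 ^ l * l.factorial) : ℝ))
    (by positivity) ?_
  calc _ = ((2 * (i + l)).choose (2 * i) : ℝ)
          * (oddDoubleFactorial i * (2 ^ i * i.factorial))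
          * (oddDoubleFactorial l * (2 ^ l * l.factorial)) := by ring
    _ = (2 * (i + l)).factorial := by
      rw [oddDoubleFactorial_mul_two_pow_mul_factorial,
        oddDoubleFactorial_mul_two_pow_mul_factorial, hchoose₂]
    _ = oddDoubleFactorial (i + l) * (2 ^ (i + l) * (i + l).factorial) :=
      (oddDoubleFactorial_mul_two_pow_mul_factorial _).symm
    _ = _ := by rw [← hchoose]; ring

lemma sum_choose_two_mul_mul_pow_mul_oddDoubleFactorial (a b : ℝ) (K : ℕ) :
    ∑ i ∈ range (K + 1), ((2 * K).choose (2 * i) : ℝ)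
        * (a ^ i * oddDoubleFactorial i) * (b ^ (K - i) * oddDoubleFactorial (K - i))
      = (a + b) ^ K * oddDoubleFactorial K := by
  rw [add_pow, sum_mul]
  refine sum_congr rfl fun i hi => ?_
  calc _ = a ^ i * b ^ (K - i) * (((2 * K).choose (2 * i) : ℝ) * oddDoubleFactorial i
          * oddDoubleFactorial (K - i)) := by ring
    _ = _ := by rw [choose_two_mul_mul_oddDoubleFactorial (mem_range_succ_iff.mp hi)]; ring

lemma three_pow_le_oddDoubleFactorial_succ (i : ℕ) : (3 : ℝ) ^ i ≤ oddDoubleFactorial (i + 1) := by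
  rw [oddDoubleFactorial, prod_range_succ']
  calc (3 : ℝ) ^ i = ∏ _j ∈ range i, 3 := by simp
    _ ≤ ∏ j ∈ range i, (2 * ((j + 1 : ℕ) : ℝ) + 1) :=
      prod_le_prod (fun _ _ => by norm_num) fun j _ => by
        push_cast; linarith [j.cast_nonneg (α := ℝ)]
    _ = _ := by simp

lemma one_div_two_mul_add_one_le (i : ℕ) :
    1 / (2 * (i : ℝ) + 1) ≤ (1 / 3) ^ i * oddDoubleFactorial i := by
  rw [one_div_pow, one_div_mul_eq_div, div_le_div_iff₀ (by positivity) (by positivity), one_mul,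
    ← oddDoubleFactorial_succ]
  exact three_pow_le_oddDoubleFactorial_succ i

lemma sum_range_two_mul_add_one_of_odd_eq_zero {M : Type*} [AddCommMonoid M] (f : ℕ → M)
    (hf : ∀ j, Odd j → f j = 0) (K : ℕ) :
    ∑ j ∈ range (2 * K + 1), f j = ∑ i ∈ range (K + 1), f (2 * i) := by
  rw [← sum_image (g := (2 * ·)) fun _ _ _ _ h => by simpa using h]
  refine (sum_subset (fun j => by simp; omega) fun j _ hj => hf j ?_).symm
  rcases Nat.even_or_odd j with ⟨i, rfl⟩ | hodd
  · exact absurd (mem_image.mpr ⟨i, by simp at *; omega, by ring⟩) hj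
  · exact hodd

namespace ProbabilityTheory

variable {Ω : Type*} [MeasurableSpace Ω] {μ : Measure Ω}

section Pair

variable {X Y : Ω → ℝ}

lemma IndepFun.integrable_pow_mul_pow_s18 (hXY : IndepFun X Y μ)
    (hX : ∀ n, Integrable (fun ω => X ω ^ n) μ) (hY : ∀ n, Integrable (fun ω => Y ω ^ n) μ)
    (j l : ℕ) : Integrable (fun ω => X ω ^ j * Y ω ^ l) μ :=
  (hXY.comp (measurable_id.pow_const j) (measurable_id.pow_const l)).integrable_mul (hX j) (hY l)

lemma IndepFun.integrable_add_pow_s18 (hXY : IndepFun X Y μ)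
    (hX : ∀ n, Integrable (fun ω => X ω ^ n) μ) (hY : ∀ n, Integrable (fun ω => Y ω ^ n) μ)
    (n : ℕ) : Integrable (fun ω => (X ω + Y ω) ^ n) μ := by
  simp_rw [add_pow]
  exact integrable_finsetSum _ fun j _ => (hXY.integrable_pow_mul_pow_s18 hX hY j _).mul_const _

lemma IndepFun.integral_add_pow_s18 (hXY : IndepFun X Y μ)
    (hX : ∀ n, Integrable (fun ω => X ω ^ n) μ) (hY : ∀ n, Integrable (fun ω => Y ω ^ n) μ)
    (n : ℕ) :
    ∫ ω, (X ω + Y ω) ^ n ∂μ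
      = ∑ j ∈ range (n + 1), (∫ ω, X ω ^ j ∂μ) * (∫ ω, Y ω ^ (n - j) ∂μ) * n.choose j := by
  simp_rw [add_pow]
  rw [integral_finsetSum _ fun j _ => (hXY.integrable_pow_mul_pow_s18 hX hY j _).mul_const _]
  refine sum_congr rfl fun j _ => ?_
  rw [integral_mul_const]
  congr 1
  exact (hXY.comp (measurable_id.pow_const j)
    (measurable_id.pow_const _)).integral_mul_eq_mul_integral
      (hX j).aestronglyMeasurable (hY _).aestronglyMeasurable

lemma IndepFun.integral_add_pow_two_mul_of_odd (hXY : IndepFun X Y μ)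
    (hX : ∀ n, Integrable (fun ω => X ω ^ n) μ) (hY : ∀ n, Integrable (fun ω => Y ω ^ n) μ)
    (hXodd : ∀ n, Odd n → ∫ ω, X ω ^ n ∂μ = 0) (K : ℕ) :
    ∫ ω, (X ω + Y ω) ^ (2 * K) ∂μ
      = ∑ i ∈ range (K + 1),
          (∫ ω, X ω ^ (2 * i) ∂μ) * (∫ ω, Y ω ^ (2 * (K - i)) ∂μ) * (2 * K).choose (2 * i) := by
  rw [hXY.integral_add_pow_s18 hX hY, sum_range_two_mul_add_one_of_odd_eq_zero _
    fun j hj => by rw [hXodd j hj, zero_mul, zero_mul]]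
  refine sum_congr rfl fun i _ => ?_
  rw [show 2 * K - 2 * i = 2 * (K - i) by omega]

theorem IndepFun.integral_add_pow_two_mul_le (hXY : IndepFun X Y μ)
    (hX : ∀ n, Integrable (fun ω => X ω ^ n) μ) (hY : ∀ n, Integrable (fun ω => Y ω ^ n) μ)
    (hXodd : ∀ n, Odd n → ∫ ω, X ω ^ n ∂μ = 0) {a b : ℝ}
    (hXa : ∀ k, ∫ ω, X ω ^ (2 * k) ∂μ ≤ a ^ k * oddDoubleFactorial k)
    (hYb : ∀ k, ∫ ω, Y ω ^ (2 * k) ∂μ ≤ b ^ k * oddDoubleFactorial k) (K : ℕ) :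
    ∫ ω, (X ω + Y ω) ^ (2 * K) ∂μ ≤ (a + b) ^ K * oddDoubleFactorial K := by
  have heven {Z : Ω → ℝ} (k : ℕ) : 0 ≤ ∫ ω, Z ω ^ (2 * k) ∂μ :=
    integral_nonneg fun ω => (even_two_mul k).pow_nonneg _
  rw [hXY.integral_add_pow_two_mul_of_odd hX hY hXodd, ←
    sum_choose_two_mul_mul_pow_mul_oddDoubleFactorial]
  refine sum_le_sum fun i _ => ?_
  rw [mul_comm _ ((2 * K).choose (2 * i) : ℝ), mul_assoc ((2 * K).choose (2 * i) : ℝ)]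
  exact mul_le_mul_of_nonneg_left
    (mul_le_mul (hXa i) (hYb _) (heven _) ((heven i).trans (hXa i))) (Nat.cast_nonneg _)

end Pair

section Family

variable [IsProbabilityMeasure μ] {ι : Type*} {X : ι → Ω → ℝ}

lemma iIndepFun.integrable_sum_pow_s18 (hX : iIndepFun X μ) (hmeas : ∀ i, Measurable (X i))
    (hmom : ∀ i n, Integrable (fun ω => X i ω ^ n) μ) (s : Finset ι) (n : ℕ) :
    Integrable (fun ω => (∑ i ∈ s, X i ω) ^ n) μ := by
  classical
  induction s using Finset.cons_induction generalizing n with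
  | empty => simp
  | cons a s ha ih =>
    simp_rw [sum_cons]
    have hindep := (hX.indepFun_finsetSum_of_notMem hmeas ha).symm
    rw [sum_fn] at hindep
    exact hindep.integrable_add_pow_s18 (hmom a) ih n

theorem iIndepFun.integral_sum_pow_two_mul_le (hX : iIndepFun X μ)
    (hmeas : ∀ i, Measurable (X i)) (hmom : ∀ i n, Integrable (fun ω => X i ω ^ n) μ)
    (hodd : ∀ i n, Odd n → ∫ ω, X i ω ^ n ∂μ = 0) {v : ι → ℝ}
    (hv : ∀ i k, ∫ ω, X i ω ^ (2 * k) ∂μ ≤ v i ^ k * oddDoubleFactorial k)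
    (s : Finset ι) (K : ℕ) :
    ∫ ω, (∑ i ∈ s, X i ω) ^ (2 * K) ∂μ ≤ (∑ i ∈ s, v i) ^ K * oddDoubleFactorial K := by
  classical
  induction s using Finset.cons_induction generalizing K with
  | empty => cases K <;> simp [oddDoubleFactorial]
  | cons a s ha ih =>
    simp_rw [sum_cons]
    have hindep := (hX.indepFun_finsetSum_of_notMem hmeas ha).symm
    rw [sum_fn] at hindep
    exact hindep.integral_add_pow_two_mul_le (hmom a)
      (hX.integrable_sum_pow_s18 hmeas hmom s) (hodd a) (hv a) ih K

end Family

end ProbabilityTheory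

lemma integrable_pow_uniform_Icc (n : ℕ) :
    Integrable (fun x : ℝ => x ^ n)
      ((ENNReal.ofReal 2)⁻¹ • volume.restrict (Set.Icc (-1 : ℝ) 1)) :=
  (continuous_pow n).integrableOn_Icc.integrable.smul_measure (by simp)

lemma integral_pow_uniform_Icc (n : ℕ) :
    ∫ x, x ^ n ∂((ENNReal.ofReal 2)⁻¹ • volume.restrict (Set.Icc (-1 : ℝ) 1))
      = if Even n then 1 / ((n : ℝ) + 1) else 0 := by
  rw [integral_smul_measure, integral_Icc_eq_integral_Ioc,
    ← intervalIntegral.integral_of_le (by norm_num), integral_pow, ENNReal.toReal_inv,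
    ENNReal.toReal_ofReal zero_le_two]
  rcases Nat.even_or_odd n with hn | hn
  · rw [(hn.add_one).neg_one_pow, if_pos hn, smul_eq_mul]
    field_simp
    norm_num
  · rw [(hn.add_one).neg_one_pow, if_neg (Nat.not_even_iff_odd.mpr hn)]
    simp

theorem even_moments_sum_uniform_le_gaussian_general (m : ℕ)
    {Ω : Type*} [MeasurableSpace Ω] (μ : Measure Ω) [IsProbabilityMeasure μ]
    (u : Fin m → Ω → ℝ) (hmeas : ∀ i, Measurable (u i))
    (hindep : iIndepFun u μ)
    (hlaw : ∀ i, Measure.map (u i) μ =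
      (ENNReal.ofReal 2)⁻¹ • volume.restrict (Set.Icc (-1 : ℝ) 1))
    (k : ℕ) :
    ∫ ω, (∑ i, u i ω) ^ (2 * k) ∂μ
      ≤ ((m : ℝ) / 3) ^ k * ∏ j ∈ Finset.range k, (2 * (j : ℝ) + 1) := by
  have hmoment (i : Fin m) (n : ℕ) :
      ∫ ω, u i ω ^ n ∂μ = if Even n then 1 / ((n : ℝ) + 1) else 0 := by
    rw [← integral_pow_uniform_Icc, ← hlaw i,
      integral_map (hmeas i).aemeasurable (by fun_prop)]
  have hint (i : Fin m) (n : ℕ) : Integrable (fun ω => u i ω ^ n) μ := by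
    have h := integrable_pow_uniform_Icc n
    rwa [← hlaw i, integrable_map_measure (by fun_prop) (hmeas i).aemeasurable] at h
  have hsum := hindep.integral_sum_pow_two_mul_le hmeas hint
    (fun _ n hn => by rw [hmoment, if_neg (Nat.not_even_iff_odd.mpr hn)])
    (v := fun _ => 1 / 3)
    (fun _ k => by
      rw [hmoment, if_pos (even_two_mul k)]
      exact_mod_cast one_div_two_mul_add_one_le k)
    Finset.univ k
  simpa [oddDoubleFactorial, div_eq_mul_one_div (m : ℝ)] using hsum

/-- If `u_1, …, u_m` are independent random variables, each uniformly
distributed on `[−1, 1]`, then for every `k`,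
`E[(Σ_i u_i)^{2k}] ≤ (m/3)^k (2k−1)!!`, where `(2k−1)!! = ∏_{j=1}^k (2j−1)` is the `2k`-th
moment of a standard Gaussian. -/
theorem even_moments_sum_uniform_le_gaussian (m : ℕ) (hm : 1 ≤ m)
    {Ω : Type*} [MeasurableSpace Ω] (μ : Measure Ω) [IsProbabilityMeasure μ]
    (u : Fin m → Ω → ℝ) (hmeas : ∀ i, Measurable (u i))
    (hindep : iIndepFun u μ)
    (hlaw : ∀ i, Measure.map (u i) μ =
      (ENNReal.ofReal 2)⁻¹ • volume.restrict (Set.Icc (-1 : ℝ) 1))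
    (k : ℕ) :
    ∫ ω, (∑ i, u i ω) ^ (2 * k) ∂μ
      ≤ ((m : ℝ) / 3) ^ k * ∏ j ∈ Finset.range k, (2 * (j : ℝ) + 1) :=
  even_moments_sum_uniform_le_gaussian_general m μ u hmeas hindep hlaw k
end
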